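/- arXiv:1711.09787 — 10 statements merged into one kernel-verified Lean document; each statement's English description precedes it below -/
import Mathlib

section
/- For any tree T on n vertices with q-Laplacian L_T^q = I + q^2(D - I) - qA (where D is the diagonal degree matrix and A the adjacency matrix), the determinant of L_T^q equals 1 - q^2 for every real number q. -/
open Matrix SimpleGraph

/- The `q`-Laplacian of a graph: `I + q^2 (D - I) - q A`, where `D` is the diagonal
degree matrix and `A` the adjacency matrix. -/
open Classical in
noncomputable def qLap {V : Type*} [Fintype V] [DecidableEq V]
    (G : SimpleGraph V) (q : ℝ) : Matrix V V ℝ :=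
  1 + q ^ 2 • (Matrix.diagonal (fun i => ((G.neighborSet i).ncard : ℝ)) - 1)
    - q • Matrix.of (fun i j => if G.Adj i j then (1 : ℝ) else 0)

open Classical in
lemma qLap_apply {V : Type*} [Fintype V] [DecidableEq V] (G : SimpleGraph V) (q : ℝ) (i j : V) :
    qLap G q i j = (if i = j then (1:ℝ) else 0)
      + q ^ 2 * ((if i = j then ((G.neighborSet i).ncard : ℝ) else 0) - (if i = j then (1:ℝ) else 0))
      - q * (if G.Adj i j then (1:ℝ) else 0) := by
  simp [qLap, Matrix.sub_apply, Matrix.add_apply, Matrix.smul_apply, Matrix.one_apply,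
    Matrix.diagonal_apply, smul_eq_mul]

open Classical in
lemma ncard_neighborSet_induce {V : Type*} [Fintype V] [DecidableEq V]
    (G : SimpleGraph V) {v : V} (i : {x : V // x ≠ v}) :
    (((G.induce {x | x ≠ v}).neighborSet i).ncard : ℝ)
      = ((G.neighborSet ↑i).ncard : ℝ) - (if G.Adj ↑i v then 1 else 0) := by
  classical
  have himg : Subtype.val '' ((G.induce {x | x ≠ v}).neighborSet i)
      = G.neighborSet ↑i \ {v} := by
    ext y
    simp only [Set.mem_image, SimpleGraph.mem_neighborSet, Set.mem_diff,
      Set.mem_singleton_iff]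
    constructor
    · rintro ⟨⟨z, hz⟩, hadj, rfl⟩
      exact ⟨hadj, hz⟩
    · rintro ⟨hadj, hy⟩
      exact ⟨⟨y, hy⟩, hadj, rfl⟩
  have hcard : ((G.induce {x | x ≠ v}).neighborSet i).ncard
      = (G.neighborSet ↑i \ {v}).ncard := by
    rw [← himg, Set.ncard_image_of_injective _ Subtype.val_injective]
  rw [hcard]
  by_cases hadj : G.Adj ↑i v
  · have hv : v ∈ G.neighborSet ↑i := hadj
    rw [Set.ncard_diff_singleton_of_mem hv]
    simp only [if_pos hadj]
    have hpos : 1 ≤ (G.neighborSet ↑i).ncard := by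
      rw [Nat.one_le_iff_ne_zero, ← Nat.pos_iff_ne_zero, Set.ncard_pos (Set.toFinite _)]
      exact ⟨v, hv⟩
    push_cast [Nat.cast_sub hpos]
    ring
  · rw [Set.diff_singleton_eq_self (s := G.neighborSet ↑i) (fun h => hadj h)]
    simp only [if_neg hadj]
    ring

lemma ncard_neighborSet_eq_degree {V : Type*} [Fintype V] [DecidableEq V] (G : SimpleGraph V)
    [DecidableRel G.Adj] (i : V) : (G.neighborSet i).ncard = G.degree i := by
  rw [SimpleGraph.degree, ← Set.ncard_coe_finset (G.neighborFinset i), neighborFinset_def,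
    Set.coe_toFinset]

lemma exists_leaf {V : Type*} [Fintype V] [DecidableEq V] (G : SimpleGraph V)
    (hT : G.IsTree) (h2 : 2 ≤ Fintype.card V) : ∃ v w, G.neighborSet v = {w} := by
  classical
  have hdeg : ∀ x : V, 1 ≤ G.degree x := by
    intro x
    obtain ⟨y, hy⟩ := Fintype.exists_ne_of_one_lt_card (by omega) x
    obtain ⟨p⟩ := hT.isConnected.preconnected x y
    cases p with
    | nil => exact absurd rfl hy.symm
    | cons h _ => exact (G.degree_pos_iff_exists_adj x).mpr ⟨_, h⟩
  by_contra hcon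
  push_neg at hcon
  have h2d : ∀ x : V, 2 ≤ G.degree x := by
    intro x
    rcases Nat.lt_or_ge (G.degree x) 2 with h | h
    · have h1 : G.degree x = 1 := le_antisymm (by omega) (hdeg x)
      obtain ⟨w, hw⟩ := Finset.card_eq_one.mp h1
      exact absurd (by rw [← Set.coe_toFinset (G.neighborSet x), ← neighborFinset_def, hw]; simp)
        (hcon x w)
    · exact h
  have hsum : ∑ x : V, G.degree x = 2 * G.edgeFinset.card :=
    G.sum_degrees_eq_twice_card_edges
  have hedge : G.edgeFinset.card + 1 = Fintype.card V := hT.card_edgeFinset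
  have : 2 * Fintype.card V ≤ ∑ x : V, G.degree x := by
    calc 2 * Fintype.card V = ∑ _x : V, 2 := by simp [mul_comm]
    _ ≤ ∑ x : V, G.degree x := Finset.sum_le_sum fun x _ => h2d x
  omega

lemma leaf_not_mem_support {V : Type*} {G : SimpleGraph V} {v w a b : V}
    (hvw : G.neighborSet v = {w}) (ha : a ≠ v) (hb : b ≠ v)
    {p : G.Walk a b} (hp : p.IsPath) : v ∉ p.support := by
  classical
  intro hmem
  have hadj_iff : ∀ x, G.Adj v x ↔ x = w := by
    intro x
    rw [← SimpleGraph.mem_neighborSet, hvw, Set.mem_singleton_iff]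
  set t := p.takeUntil v hmem with ht
  set d := p.dropUntil v hmem with hd
  have hspec : t.append d = p := p.take_spec hmem
  have hsupp : p.support = t.support ++ d.support.tail := by
    rw [← hspec, SimpleGraph.Walk.support_append]
  have hnodup : (t.support ++ d.support.tail).Nodup := by
    rw [← hsupp]; exact hp.support_nodup
  have hdisj := (List.nodup_append.mp hnodup).2.2
  clear_value t d
  cases d with
  | nil => exact hb rfl
  | @cons _ y _ hadj d' =>
    have hy : y ∈ d'.support := d'.start_mem_support
    have hyw : y = w := (hadj_iff y).mp hadj
    have htail : (SimpleGraph.Walk.cons hadj d').support.tail = d'.support := by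
      simp [SimpleGraph.Walk.support_cons]
    have hrev : t.reverse.reverse = t := t.reverse_reverse
    cases htr : t.reverse with
    | nil => exact ha rfl
    | @cons _ x _ hadj2 t' =>
      have hxw : x = w := (hadj_iff x).mp hadj2
      have hx : x ∈ t.support := by
        have : x ∈ t.reverse.support := by
          rw [htr]; simp [SimpleGraph.Walk.support_cons, t'.start_mem_support]
        rwa [SimpleGraph.Walk.support_reverse, List.mem_reverse] at this
      refine hdisj x hx x ?_ rfl
      rw [htail, hxw, ← hyw]
      exact hy

lemma isTree_induce_compl {V : Type*} {G : SimpleGraph V} {v w : V}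
    (hT : G.IsTree) (hvw : G.neighborSet v = {w}) :
    (G.induce {x | x ≠ v}).IsTree := by
  classical
  have hwv : w ≠ v := by
    have : G.Adj v w := by rw [← SimpleGraph.mem_neighborSet, hvw]; rfl
    exact this.ne'
  constructor
  · apply SimpleGraph.induce_connected_of_patches w hwv
    intro x hx
    obtain ⟨r⟩ := hT.isConnected.preconnected w x
    let p := r.toPath
    have hvp : v ∉ p.1.support := leaf_not_mem_support hvw hwv hx p.2
    refine ⟨{y | y ∈ p.1.support}, fun y hy => ?_, p.1.start_mem_support,
      p.1.end_mem_support, ?_⟩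
    · intro h; exact hvp (h ▸ hy)
    · exact p.1.connected_induce_support.preconnected _ _
  · intro a c hc
    exact hT.IsAcyclic (c.map (SimpleGraph.Embedding.induce {x | x ≠ v}).toHom)
      (hc.map Subtype.val_injective)

theorem det_qLap_aux : ∀ (n : ℕ) {V : Type u} [Fintype V] [DecidableEq V]
    (G : SimpleGraph V), G.IsTree → Fintype.card V = n → ∀ q : ℝ,
    (qLap G q).det = 1 - q ^ 2 := by
  intro n
  induction n using Nat.strong_induction_on with
  | _ n IH =>
    intro V _ _ G hT hcard q
    classical
    have hne : Nonempty V := hT.isConnected.nonempty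
    have h1 : 1 ≤ Fintype.card V := Fintype.card_pos
    rcases eq_or_lt_of_le h1 with hone | h2
    · -- card V = 1
      obtain ⟨x, hx⟩ := Fintype.card_eq_one_iff.mp hone.symm
      have : Unique V := ⟨⟨x⟩, hx⟩
      rw [Matrix.det_unique, qLap_apply]
      have hns : G.neighborSet default = ∅ := by
        ext y
        simp only [SimpleGraph.mem_neighborSet, Set.mem_empty_iff_false, iff_false]
        intro h
        exact G.irrefl ((hx y).symm ▸ (hx default).symm ▸ h)
      rw [hns]
      simp [G.irrefl]
      ring
    · -- card V ≥ 2
      obtain ⟨v, w, hvw⟩ := exists_leaf G hT h2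
      have hadj_vw : G.Adj v w := by rw [← SimpleGraph.mem_neighborSet, hvw]; rfl
      have hwv : w ≠ v := hadj_vw.ne'
      have hadj_iff : ∀ x, G.Adj v x ↔ x = w := by
        intro x; rw [← SimpleGraph.mem_neighborSet, hvw, Set.mem_singleton_iff]
      set s : Set V := {x | x ≠ v} with hs
      set G' := G.induce s with hG'
      have hT' : G'.IsTree := isTree_induce_compl hT hvw
      -- the equivalence
      let e : (↥s ⊕ Unit) ≃ V :=
        { toFun := Sum.elim Subtype.val (fun _ => v)
          invFun := fun x => if h : x = v then Sum.inr () else Sum.inl ⟨x, h⟩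
          left_inv := by
            rintro (⟨x, hx⟩ | ⟨⟩)
            · exact dif_neg (show ¬ x = v from hx)
            · simp
          right_inv := by
            intro x
            by_cases h : x = v <;> simp [h] }
      -- block decomposition
      have hvv : qLap G q v v = 1 := by
        rw [qLap_apply, hvw]
        simp [G.irrefl]
      have key : (qLap G q).submatrix e e =
          Matrix.fromBlocks (Matrix.of fun i j : ↥s => qLap G q ↑i ↑j)
            (Matrix.of fun (i : ↥s) (_ : Unit) => qLap G q ↑i v)
            (Matrix.of fun (_ : Unit) (j : ↥s) => qLap G q v ↑j) 1 := by
        ext i j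
        cases i with
        | inl i =>
          cases j with
          | inl j => rfl
          | inr j => rfl
        | inr i =>
          cases j with
          | inl j => rfl
          | inr j =>
            simp only [Matrix.submatrix_apply, Matrix.fromBlocks_apply₂₂]
            rw [show (qLap G q) (e (Sum.inr i)) (e (Sum.inr j)) = qLap G q v v from rfl, hvv]
            simp [Matrix.one_apply]
      have hdet1 : (qLap G q).det = ((qLap G q).submatrix e e).det :=
        (Matrix.det_submatrix_equiv_self e _).symm
      rw [hdet1, key, Matrix.det_fromBlocks_one₂₂]
      -- Schur complement equals qLap of induced graph
      have hschur : (Matrix.of fun i j : ↥s => qLap G q ↑i ↑j)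
          - (Matrix.of fun (i : ↥s) (_ : Unit) => qLap G q ↑i v)
            * (Matrix.of fun (_ : Unit) (j : ↥s) => qLap G q v ↑j)
          = qLap G' q := by
        ext i j
        have hmul : ((Matrix.of fun (i : ↥s) (_ : Unit) => qLap G q ↑i v)
            * (Matrix.of fun (_ : Unit) (j : ↥s) => qLap G q v ↑j)) i j
            = qLap G q ↑i v * qLap G q v ↑j := by
          rw [Matrix.mul_apply]
          simp
        rw [Matrix.sub_apply, hmul]
        simp only [Matrix.of_apply]
        have hiv : (↑i : V) ≠ v := i.2
        have hjv : (↑j : V) ≠ v := j.2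
        rw [qLap_apply, qLap_apply, qLap_apply, qLap_apply]
        rw [ncard_neighborSet_induce G i]
        have hadj' : G'.Adj i j ↔ G.Adj ↑i ↑j := Iff.rfl
        have hij : (i = j) ↔ ((i : V) = ↑j) := Subtype.ext_iff
        have haiv : G.Adj ↑i v ↔ (↑i : V) = w := by
          rw [adj_comm]; exact hadj_iff _
        have hajv : G.Adj v ↑j ↔ (↑j : V) = w := hadj_iff _
        simp only [if_neg hiv, if_neg hjv, if_neg (fun h => hiv (h : (↑i:V) = v)),
          if_neg (fun h => hjv (h : v = ↑j).symm)]
        by_cases hijeq : i = j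
        · subst hijeq
          simp only [if_pos rfl, if_pos (rfl : (↑i:V) = ↑i)]
          have hA : ¬ G.Adj ↑i ↑i := G.irrefl
          have hA' : ¬ G'.Adj i i := G'.irrefl
          simp only [if_neg hA, if_neg hA', if_true, eq_self_iff_true]
          by_cases hiw : (↑i : V) = w
          · have : G.Adj ↑i v := haiv.mpr hiw
            have hB : G.Adj v ↑i := hajv.mpr hiw
            simp only [if_pos this, if_pos hB]
            ring
          · have h1 : ¬ G.Adj ↑i v := fun h => hiw (haiv.mp h)
            have h2 : ¬ G.Adj v ↑i := fun h => hiw (hadj_iff _ |>.mp h)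
            simp only [if_neg h1, if_neg h2]
            ring
        · have hij' : (↑i : V) ≠ ↑j := fun h => hijeq (Subtype.ext h)
          simp only [if_neg hijeq, if_neg hij']
          have hAiff : G'.Adj i j ↔ G.Adj ↑i ↑j := Iff.rfl
          have hA : (if G'.Adj i j then (1:ℝ) else 0) = (if G.Adj ↑i ↑j then (1:ℝ) else 0) := by
            by_cases h : G.Adj ↑i ↑j
            · rw [if_pos h, if_pos (hAiff.mpr h)]
            · rw [if_neg h, if_neg (fun hh => h (hAiff.mp hh))]
          erw [hA]
          by_cases hiw : (↑i : V) = w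
          · have hjw : (↑j : V) ≠ w := fun h => hij' (by rw [hiw, h])
            have h2 : ¬ G.Adj v ↑j := fun h => hjw (hadj_iff _ |>.mp h)
            simp only [if_neg h2]
            ring
          · have h1 : ¬ G.Adj ↑i v := fun h => hiw (haiv.mp h)
            simp only [if_neg h1]
            ring
      rw [hschur]
      have hcard' : Fintype.card ↥s = n - 1 := by
        have h1 : Fintype.card ↥s = Fintype.card {x : V // ¬ x = v} :=
          Fintype.card_congr (Equiv.subtypeEquivRight (fun x => Iff.rfl))
        rw [h1, Fintype.card_subtype_compl, Fintype.card_subtype_eq]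
        omega
      have := IH (n - 1) (by omega) G' hT' hcard' q
      rw [this]
theorem det_qLap_tree {V : Type*} [Fintype V] [DecidableEq V]
    (G : SimpleGraph V) (hT : G.IsTree) (q : ℝ) :
    (qLap G q).det = 1 - q ^ 2 := by
  exact det_qLap_aux (Fintype.card V) G hT rfl q
end

section
/- For any tree T on n vertices and any real q with |q| < 1, the q-Laplacian matrix L_T^q = I + q^2(D - I) - qA is positive definite. -/
open Matrix SimpleGraph

private lemma exists_parent' {V : Type*} {G : SimpleGraph V}
    (hc : G.Connected) (r : V) : ∀ v, v ≠ r → ∃ w, G.Adj v w ∧ G.dist w r + 1 = G.dist v r := by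
  intro v hv
  have hd : G.dist v r ≠ 0 := by simp [hv, hc v r]
  obtain ⟨pw, hp⟩ := SimpleGraph.exists_walk_of_dist_ne_zero hd
  cases pw with
  | nil => exact absurd rfl hv
  | @cons _ w _ h p' =>
    refine ⟨w, h, ?_⟩
    have h1 : G.dist w r ≤ p'.length := SimpleGraph.dist_le p'
    have h2 : G.dist v r ≤ G.dist v w + G.dist w r := hc.dist_triangle
    have h3 : G.dist v w = 1 := SimpleGraph.dist_eq_one_iff_adj.2 h
    simp only [SimpleGraph.Walk.length_cons] at hp
    omega

private lemma adj_iff_parent' {V : Type*} [Fintype V] [DecidableEq V] {G : SimpleGraph V}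
    (hT : G.IsTree) (r : V) (p : V → V)
    (hp1 : ∀ v, v ≠ r → G.Adj v (p v))
    (hp2 : ∀ v, v ≠ r → G.dist (p v) r + 1 = G.dist v r) :
    ∀ i j, G.Adj i j ↔ (i ≠ r ∧ p i = j) ∨ (j ≠ r ∧ p j = i) := by
  classical
  intro i j
  constructor
  · intro hij
    have hcard := hT.card_edgeFinset
    have hinj : Set.InjOn (fun v => s(v, p v)) (Finset.univ.erase r : Finset V) := by
      intro a ha b hb hab
      simp only [Sym2.eq_iff] at hab
      rcases hab with ⟨h1, h2⟩ | ⟨h1, h2⟩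
      · exact h1
      · exfalso
        have ha' := hp2 a (Finset.mem_erase.1 (Finset.mem_coe.1 ha)).1
        have hb' := hp2 b (Finset.mem_erase.1 (Finset.mem_coe.1 hb)).1
        rw [h2] at ha'
        rw [← h1] at hb'
        omega
    have hsub : (Finset.univ.erase r).image (fun v => s(v, p v)) ⊆ G.edgeFinset := by
      intro e he
      obtain ⟨v, hv, rfl⟩ := Finset.mem_image.1 he
      exact SimpleGraph.mem_edgeFinset.2 (hp1 v (Finset.mem_erase.1 hv).1)
    have hcards : ((Finset.univ.erase r).image (fun v => s(v, p v))).card = G.edgeFinset.card := by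
      rw [Finset.card_image_of_injOn hinj, Finset.card_erase_of_mem (Finset.mem_univ r),
        Finset.card_univ]
      omega
    have heq : (Finset.univ.erase r).image (fun v => s(v, p v)) = G.edgeFinset :=
      Finset.eq_of_subset_of_card_le hsub (le_of_eq hcards.symm)
    have hmem : s(i, j) ∈ G.edgeFinset := SimpleGraph.mem_edgeFinset.2 hij
    rw [← heq] at hmem
    obtain ⟨v, hv, hvv⟩ := Finset.mem_image.1 hmem
    have hvr := (Finset.mem_erase.1 hv).1
    rw [Sym2.eq_iff] at hvv
    rcases hvv with ⟨h1, h2⟩ | ⟨h1, h2⟩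
    · exact Or.inl ⟨h1 ▸ hvr, h1 ▸ h2⟩
    · exact Or.inr ⟨h1 ▸ hvr, h1 ▸ h2⟩
  · rintro (⟨h1, h2⟩ | ⟨h1, h2⟩)
    · exact h2 ▸ hp1 i h1
    · exact (h2 ▸ hp1 j h1).symm

private lemma pair_sum' {V : Type*} [Fintype V] [DecidableEq V] (G : SimpleGraph V)
    (r : V) (p : V → V)
    (hadj : ∀ i j, G.Adj i j ↔ (i ≠ r ∧ p i = j) ∨ (j ≠ r ∧ p j = i))
    (hd : ∀ i j, i ≠ r → j ≠ r → p i = j → p j ≠ i)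
    (g : V → V → ℝ) (hg : ∀ i j, ¬ G.Adj i j → g i j = 0) :
    ∑ i, ∑ j, g i j = ∑ v ∈ Finset.univ.erase r, (g v (p v) + g (p v) v) := by
  classical
  rw [← Finset.sum_product' (s := Finset.univ) (t := Finset.univ)]
  rw [← Finset.sum_filter_of_ne (p := fun z : V × V => G.Adj z.1 z.2)
    (by intro z _ hz; by_contra hc; exact hz (hg z.1 z.2 hc))]
  have hfil : (Finset.univ ×ˢ Finset.univ).filter (fun z : V × V => G.Adj z.1 z.2)
      = ((Finset.univ ×ˢ Finset.univ).filter (fun z : V × V => z.1 ≠ r ∧ p z.1 = z.2))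
        ∪ ((Finset.univ ×ˢ Finset.univ).filter (fun z : V × V => z.2 ≠ r ∧ p z.2 = z.1)) := by
    rw [← Finset.filter_or]
    exact Finset.filter_congr (fun z _ => by simpa using (hadj z.1 z.2))
  have hdisj : Disjoint
      ((Finset.univ ×ˢ Finset.univ).filter (fun z : V × V => z.1 ≠ r ∧ p z.1 = z.2))
      ((Finset.univ ×ˢ Finset.univ).filter (fun z : V × V => z.2 ≠ r ∧ p z.2 = z.1)) := by
    rw [Finset.disjoint_left]
    rintro z hz1 hz2
    simp only [Finset.mem_filter] at hz1 hz2
    exact hd z.1 z.2 hz1.2.1 hz2.2.1 hz1.2.2 hz2.2.2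
  rw [hfil, Finset.sum_union hdisj, Finset.sum_add_distrib]
  congr 1
  · refine Finset.sum_nbij' (fun z => z.1) (fun v => (v, p v)) ?_ ?_ ?_ ?_ ?_
    · intro z hz; simp only [Finset.mem_filter] at hz
      exact Finset.mem_erase.2 ⟨hz.2.1, Finset.mem_univ _⟩
    · intro v hv
      simp only [Finset.mem_filter, Finset.mem_product]
      exact ⟨⟨Finset.mem_univ _, Finset.mem_univ _⟩, (Finset.mem_erase.1 hv).1, trivial⟩
    · intro z hz; simp only [Finset.mem_filter] at hz
      exact Prod.ext rfl hz.2.2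
    · intro v hv; rfl
    · intro z hz; simp only [Finset.mem_filter] at hz
      rw [hz.2.2]
  · refine Finset.sum_nbij' (fun z => z.2) (fun v => (p v, v)) ?_ ?_ ?_ ?_ ?_
    · intro z hz; simp only [Finset.mem_filter] at hz
      exact Finset.mem_erase.2 ⟨hz.2.1, Finset.mem_univ _⟩
    · intro v hv
      simp only [Finset.mem_filter, Finset.mem_product]
      exact ⟨⟨Finset.mem_univ _, Finset.mem_univ _⟩, (Finset.mem_erase.1 hv).1, trivial⟩
    · intro z hz; simp only [Finset.mem_filter] at hz
      exact Prod.ext hz.2.2 rfl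
    · intro v hv; rfl
    · intro z hz; simp only [Finset.mem_filter] at hz
      rw [hz.2.2]

theorem qLap_posDef {V : Type*} [Fintype V] [DecidableEq V]
    (G : SimpleGraph V) (hT : G.IsTree) (q : ℝ) (hq : |q| < 1) :
    (qLap G q).PosDef := by
  classical
  have hq2 : 0 < 1 - q ^ 2 := by
    rw [abs_lt] at hq
    nlinarith [hq.1, hq.2]
  have hconn := hT.isConnected
  have hne : Nonempty V := hconn.nonempty
  obtain ⟨r⟩ := hne
  choose! p hp1 hp2 using exists_parent' hconn r
  have hadj := adj_iff_parent' hT r p hp1 hp2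
  have hd : ∀ i j, i ≠ r → j ≠ r → p i = j → p j ≠ i := by
    intro i j hi hj hij hji
    have h1 := hp2 i hi
    have h2 := hp2 j hj
    rw [hij] at h1
    rw [hji] at h2
    omega
  have hdeg : ∀ i, ((G.neighborSet i).ncard : ℝ) = ∑ j, (if G.Adj i j then (1 : ℝ) else 0) := by
    intro i
    rw [Finset.sum_boole]
    congr 1
    rw [Set.ncard_eq_toFinset_card']
    congr 1
    ext j
    simp
  -- expansion of the quadratic form
  have expand : ∀ x : V → ℝ, x ⬝ᵥ (qLap G q).mulVec x =
      (∑ i, x i ^ 2)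
      + q ^ 2 * ((∑ i, ((G.neighborSet i).ncard : ℝ) * x i ^ 2) - ∑ i, x i ^ 2)
      - q * (∑ i, ∑ j, (if G.Adj i j then x i * x j else 0)) := by
    intro x
    have hmv : ∀ i, (qLap G q).mulVec x i
        = (x i + q ^ 2 * (((G.neighborSet i).ncard : ℝ) * x i - x i))
          - q * ∑ j, (if G.Adj i j then x j else 0) := by
      intro i
      have h1 : ∀ j, (qLap G q) i j * x j
          = (if i = j then x i + q ^ 2 * (((G.neighborSet i).ncard : ℝ) * x i - x i) else 0)
            - (if G.Adj i j then q * x j else 0) := by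
        intro j
        simp only [qLap, Matrix.sub_apply, Matrix.add_apply, Matrix.smul_apply, Matrix.one_apply,
          Matrix.diagonal_apply, Matrix.of_apply, smul_eq_mul]
        by_cases h : i = j
        · subst h
          simp
          ring
        · by_cases h2 : G.Adj i j <;> simp [h, h2]
      show ∑ j, (qLap G q) i j * x j = _
      simp only [h1]
      rw [Finset.sum_sub_distrib, Finset.sum_ite_eq]
      simp [Finset.mul_sum, mul_ite]
    simp only [dotProduct, hmv]
    have h2 : ∀ i, x i * ((x i + q ^ 2 * (((G.neighborSet i).ncard : ℝ) * x i - x i))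
          - q * ∑ j, (if G.Adj i j then x j else 0))
        = (x i ^ 2 + q ^ 2 * (((G.neighborSet i).ncard : ℝ) * x i ^ 2 - x i ^ 2))
          - q * ∑ j, (if G.Adj i j then x i * x j else 0) := by
      intro i
      have h4 : x i * (∑ j, (if G.Adj i j then x j else 0))
          = ∑ j, (if G.Adj i j then x i * x j else 0) := by
        rw [Finset.mul_sum]
        exact Finset.sum_congr rfl fun j _ => by by_cases h : G.Adj i j <;> simp [h]
      rw [← h4]
      ring
    simp only [h2]
    rw [Finset.sum_sub_distrib, Finset.sum_add_distrib, ← Finset.mul_sum, Finset.sum_sub_distrib,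
      ← Finset.mul_sum]
  -- the key identity
  have key : ∀ x : V → ℝ, x ⬝ᵥ (qLap G q).mulVec x
      = (1 - q ^ 2) * x r ^ 2 + ∑ v ∈ Finset.univ.erase r, (x v - q * x (p v)) ^ 2 := by
    intro x
    have e1 : (∑ i, x i ^ 2) = x r ^ 2 + ∑ v ∈ Finset.univ.erase r, x v ^ 2 := by
      rw [← Finset.sum_erase_add Finset.univ _ (Finset.mem_univ r), add_comm]
    have e2 : (∑ i, ((G.neighborSet i).ncard : ℝ) * x i ^ 2)
        = (∑ v ∈ Finset.univ.erase r, x v ^ 2) + ∑ v ∈ Finset.univ.erase r, x (p v) ^ 2 := by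
      have h5 : ∀ i, ((G.neighborSet i).ncard : ℝ) * x i ^ 2
          = ∑ j, (if G.Adj i j then x i ^ 2 else 0) := by
        intro i
        rw [hdeg i, Finset.sum_mul]
        exact Finset.sum_congr rfl fun j _ => by by_cases h : G.Adj i j <;> simp [h]
      rw [show (∑ i, ((G.neighborSet i).ncard : ℝ) * x i ^ 2)
          = ∑ i, ∑ j, (if G.Adj i j then x i ^ 2 else 0) from Finset.sum_congr rfl fun i _ => h5 i]
      rw [pair_sum' G r p hadj hd _ (fun i j h => by simp [h])]
      rw [← Finset.sum_add_distrib]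
      refine Finset.sum_congr rfl fun v hv => ?_
      have hvr := (Finset.mem_erase.1 hv).1
      simp [hp1 v hvr, (hp1 v hvr).symm]
    have e3 : (∑ i, ∑ j, (if G.Adj i j then x i * x j else 0))
        = 2 * ∑ v ∈ Finset.univ.erase r, x v * x (p v) := by
      rw [pair_sum' G r p hadj hd _ (fun i j h => by simp [h])]
      rw [Finset.mul_sum]
      refine Finset.sum_congr rfl fun v hv => ?_
      have hvr := (Finset.mem_erase.1 hv).1
      simp [hp1 v hvr, (hp1 v hvr).symm]
      ring
    have e4 : (∑ v ∈ Finset.univ.erase r, (x v - q * x (p v)) ^ 2)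
        = (∑ v ∈ Finset.univ.erase r, x v ^ 2)
          - 2 * q * (∑ v ∈ Finset.univ.erase r, x v * x (p v))
          + q ^ 2 * (∑ v ∈ Finset.univ.erase r, x (p v) ^ 2) := by
      rw [show (∑ v ∈ Finset.univ.erase r, (x v - q * x (p v)) ^ 2)
          = ∑ v ∈ Finset.univ.erase r,
            (x v ^ 2 - 2 * q * (x v * x (p v)) + q ^ 2 * x (p v) ^ 2) from
        Finset.sum_congr rfl fun v _ => by ring]
      rw [Finset.sum_add_distrib, Finset.sum_sub_distrib, ← Finset.mul_sum, ← Finset.mul_sum]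
    rw [expand x, e1, e2, e3, e4]
    ring
  rw [posDef_iff_dotProduct_mulVec]
  constructor
  · -- Hermitian
    ext i j
    simp only [conjTranspose_apply, star_trivial]
    by_cases h : i = j
    · subst h; rfl
    · simp [qLap, Matrix.one_apply, Matrix.diagonal_apply, h, Ne.symm h, G.adj_comm]
  · intro x hx
    simp only [star_trivial]
    rw [key x]
    obtain ⟨u, hu⟩ := Function.ne_iff.1 hx
    have hSne : (Finset.univ.filter fun w => x w ≠ 0).Nonempty :=
      ⟨u, Finset.mem_filter.2 ⟨Finset.mem_univ _, hu⟩⟩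
    obtain ⟨v, hv, hmin⟩ := Finset.exists_min_image _ (fun w => G.dist w r) hSne
    have hxv : x v ≠ 0 := (Finset.mem_filter.1 hv).2
    by_cases hvr : v = r
    · refine add_pos_of_pos_of_nonneg ?_ (Finset.sum_nonneg fun w _ => sq_nonneg _)
      have : x r ≠ 0 := hvr ▸ hxv
      have := sq_nonneg (x r)
      have hne : x r ^ 2 ≠ 0 := pow_ne_zero 2 ‹x r ≠ 0›
      exact mul_pos hq2 (lt_of_le_of_ne (sq_nonneg _) (Ne.symm hne))
    · refine add_pos_of_nonneg_of_pos (mul_nonneg (le_of_lt hq2) (sq_nonneg _)) ?_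
      refine Finset.sum_pos' (fun w _ => sq_nonneg _)
        ⟨v, Finset.mem_erase.2 ⟨hvr, Finset.mem_univ _⟩, ?_⟩
      have hpv0 : x (p v) = 0 := by
        by_contra h
        have hmem : p v ∈ Finset.univ.filter fun w => x w ≠ 0 :=
          Finset.mem_filter.2 ⟨Finset.mem_univ _, h⟩
        have := hmin _ hmem
        have h2 := hp2 v hvr
        omega
      have hne2 : x v - q * x (p v) ≠ 0 := by
        rw [hpv0]
        simpa using hxv
      exact lt_of_le_of_ne (sq_nonneg _) (Ne.symm (pow_ne_zero 2 hne2))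
end

section
/- Let T be a tree on n vertices with exponential distance matrix ED_T, defined by (ED_T)_{ij} = q^{d(i,j)} where d(i,j) is the graph distance between vertices i and j (so diagonal entries are 1). If q ∈ ℝ with q ≠ ±1, then ED_T is invertible and ED_T^{-1} = (1/(1-q^2)) · L_T^q, where L_T^q = I + q^2(D - I) - qA is the q-Laplacian of T. -/
open Matrix SimpleGraph

/- The exponential distance matrix of a graph: entry `(i,j)` is `q ^ dist(i,j)`. -/
noncomputable def expDist {V : Type*} (G : SimpleGraph V) (q : ℝ) : Matrix V V ℝ :=
  Matrix.of fun i j => q ^ (G.dist i j)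

lemma tree_step {V : Type*} [DecidableEq V] (G : SimpleGraph V) (hT : G.IsTree) {i j : V} (hij : j ≠ i) :
    ∃ k0, G.Adj j k0 ∧ G.dist k0 i + 1 = G.dist j i ∧
      ∀ k, G.Adj j k → k ≠ k0 → G.dist k i = G.dist j i + 1 := by
  have hc := hT.isConnected
  obtain ⟨P, hP, hPlen⟩ := hc.exists_path_of_dist j i
  obtain ⟨k0, hadj, P', rfl⟩ := P.exists_eq_cons_of_ne hij
  rw [Walk.cons_isPath_iff] at hP
  rw [Walk.length_cons] at hPlen
  have hd0 : G.dist k0 i + 1 = G.dist j i := by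
    have h1 : G.dist k0 i ≤ P'.length := dist_le P'
    have h2 : G.dist j i ≤ G.dist j k0 + G.dist k0 i := hc.dist_triangle
    have h3 : G.dist j k0 = 1 := dist_eq_one_iff_adj.2 hadj
    omega
  refine ⟨k0, hadj, hd0, ?_⟩
  intro k hk hkk0
  have hjk : G.dist k j = 1 := dist_eq_one_iff_adj.2 hk.symm
  have hub : G.dist k i ≤ G.dist j i + 1 := by
    have := hc.dist_triangle (u := k) (v := j) (w := i)
    omega
  rcases Nat.lt_or_ge (G.dist j i) (G.dist k i) with h | h
  · omega
  · exfalso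
    obtain ⟨Q, hQ, hQlen⟩ := hc.exists_path_of_dist k i
    have hjQ : j ∉ Q.support := by
      intro hjQ
      have hsplit := congrArg Walk.length (Q.take_spec hjQ)
      rw [Walk.length_append] at hsplit
      have h1 : G.dist k j ≤ (Q.takeUntil j hjQ).length := dist_le _
      have h2 : G.dist j i ≤ (Q.dropUntil j hjQ).length := dist_le _
      omega
    have hRpath : (Walk.cons hk Q).IsPath := hQ.cons hjQ
    have heq := (hT.existsUnique_path j i).unique hRpath
      (Walk.cons_isPath_iff hadj P' |>.2 hP)
    have := congrArg (fun w => w.getVert 1) heq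
    simp only [Walk.getVert_cons_succ, Walk.getVert_zero] at this
    exact hkk0 this

lemma key {V : Type*} [Fintype V] [DecidableEq V]
    (G : SimpleGraph V) (hT : G.IsTree) (q : ℝ) (i j : V) :
    ∑ k, (expDist G q) i k * (qLap G q) k j = if i = j then 1 - q ^ 2 else 0 := by
  classical
  set c : ℝ := ((G.neighborSet j).ncard : ℝ) with hc
  have hcard : c = ((G.neighborFinset j).card : ℝ) := by
    rw [hc, neighborFinset_def, Set.ncard_eq_toFinset_card']
  have hL : ∀ k, qLap G q k j =
      (if k = j then 1 + q ^ 2 * (c - 1) else 0) - q * (if G.Adj k j then 1 else 0) := by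
    intro k
    by_cases h : k = j
    · subst h
      simp only [qLap, Matrix.sub_apply, Matrix.add_apply, Matrix.smul_apply,
        Matrix.one_apply_eq, Matrix.diagonal_apply_eq, Matrix.of_apply, smul_eq_mul,
        if_pos rfl, if_neg (G.irrefl), mul_zero, sub_zero, if_true]
      rfl
    · by_cases h2 : G.Adj k j
      · simp [qLap, Matrix.one_apply_ne h, Matrix.diagonal_apply_ne _ h, h, h2]
      · simp [qLap, Matrix.one_apply_ne h, Matrix.diagonal_apply_ne _ h, h, h2]
  simp_rw [hL, mul_sub, Finset.sum_sub_distrib, mul_ite, mul_one, mul_zero,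
    Finset.sum_ite_eq', Finset.mem_univ, if_true]
  have hnb : (Finset.univ.filter (fun k => G.Adj k j)) = G.neighborFinset j := by
    ext k; simp [adj_comm]
  rw [← Finset.sum_filter, hnb]
  by_cases hij : i = j
  · subst hij
    have h1 : ∀ k ∈ G.neighborFinset i, (expDist G q) i k * q = q * q := by
      intro k hk
      rw [mem_neighborFinset] at hk
      simp [expDist, dist_eq_one_iff_adj.2 hk]
    rw [Finset.sum_congr rfl h1, Finset.sum_const, if_pos rfl]
    simp only [expDist, Matrix.of_apply, SimpleGraph.dist_self, pow_zero, nsmul_eq_mul, ← hcard]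
    ring
  · rw [if_neg hij]
    obtain ⟨k0, hadj, hd0, hrest⟩ := tree_step G hT (Ne.symm hij)
    have hk0mem : k0 ∈ G.neighborFinset j := (mem_neighborFinset _ _ _).2 hadj
    rw [← Finset.sum_erase_add _ _ hk0mem]
    have h2 : ∀ k ∈ (G.neighborFinset j).erase k0,
        (expDist G q) i k * q = q ^ (G.dist k0 i + 2) * q := by
      intro k hk
      obtain ⟨hne, hmem⟩ := Finset.mem_erase.1 hk
      rw [mem_neighborFinset] at hmem
      have h3 := hrest k hmem hne
      have hik : G.dist i k = G.dist k0 i + 2 := by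
        rw [SimpleGraph.dist_comm]; omega
      simp [expDist, hik]
    rw [Finset.sum_congr rfl h2, Finset.sum_const, Finset.card_erase_of_mem hk0mem]
    have hcard1 : 1 ≤ (G.neighborFinset j).card := Finset.card_pos.2 ⟨k0, hk0mem⟩
    have hcast : (((G.neighborFinset j).card - 1 : ℕ) : ℝ) = c - 1 := by
      rw [Nat.cast_sub hcard1, hcard]; norm_num
    have hej : (expDist G q) i j = q ^ (G.dist k0 i + 1) := by
      simp only [expDist, Matrix.of_apply]
      rw [SimpleGraph.dist_comm, ← hd0]
    have hek : (expDist G q) i k0 = q ^ (G.dist k0 i) := by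
      simp only [expDist, Matrix.of_apply, SimpleGraph.dist_comm]
    rw [hej, hek, nsmul_eq_mul, hcast]
    ring

theorem expDist_inv {V : Type*} [Fintype V] [DecidableEq V]
    (G : SimpleGraph V) (hT : G.IsTree) (q : ℝ) (hq1 : q ≠ 1) (hq2 : q ≠ -1) :
    IsUnit (expDist G q).det ∧
      (expDist G q)⁻¹ = (1 / (1 - q ^ 2)) • qLap G q := by
  classical
  have hq : (1 - q ^ 2) ≠ 0 := by
    intro h
    have h2 : (q - 1) * (q + 1) = 0 := by nlinarith
    rcases mul_eq_zero.1 h2 with h3 | h3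
    · exact hq1 (by linarith)
    · exact hq2 (by linarith)
  have hmul : expDist G q * ((1 / (1 - q ^ 2)) • qLap G q) = 1 := by
    rw [Matrix.mul_smul]
    have h1 : expDist G q * qLap G q = (1 - q ^ 2) • (1 : Matrix V V ℝ) := by
      ext i j
      rw [Matrix.mul_apply, key G hT q i j]
      simp only [Matrix.smul_apply, Matrix.one_apply, smul_eq_mul, mul_ite, mul_one, mul_zero]
    rw [h1, smul_smul, one_div, inv_mul_cancel₀ hq, one_smul]
  exact ⟨Matrix.isUnit_det_of_right_inverse hmul, Matrix.inv_eq_right_inv hmul⟩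
end

section
/- For any tree T on n vertices and any real q with q ≠ ±1, every eigenvalue of the exponential distance matrix ED_T equals (1-q^2)/λ for some eigenvalue λ of the q-Laplacian L_T^q; in particular every eigenvalue of L_T^q is nonzero. -/
open Matrix SimpleGraph

/-- In a tree, every path realizes the distance. -/
private lemma tree_dist_eq {V : Type*} {G : SimpleGraph V} (hT : G.IsTree) {i j : V}
    (p : G.Walk i j) (hp : p.IsPath) : G.dist i j = p.length := by
  refine le_antisymm (SimpleGraph.dist_le p) ?_
  obtain ⟨w, hwp, hwl⟩ := hT.isConnected.exists_path_of_dist i j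
  have : p = w := (hT.existsUnique_path i j).unique hp hwp
  rw [this, hwl]

/-- In a tree, for `i ≠ k` there is a distinguished neighbor `j0` of `k` at distance
`dist i k - 1` from `i`, and all other neighbors of `k` are at distance `dist i k + 1`. -/
private lemma tree_neighbor {V : Type*} [DecidableEq V] {G : SimpleGraph V} (hT : G.IsTree) {i k : V}
    (hik : i ≠ k) :
    ∃ j0, G.Adj k j0 ∧ G.dist i j0 + 1 = G.dist i k ∧
      ∀ j, G.Adj k j → j ≠ j0 → G.dist i j = G.dist i k + 1 := by
  obtain ⟨p, hp, hpl⟩ := hT.isConnected.exists_path_of_dist i k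
  cases hpr : p.reverse with
  | nil =>
    exfalso
    have := congrArg Walk.length hpr
    rw [Walk.length_reverse] at this
    simp only [Walk.length_nil] at this
    exact hik (p.eq_of_length_eq_zero this)
  | cons h q =>
    rename_i j0
    -- h : G.Adj k j0, q : G.Walk j0 i
    have hqpath : q.IsPath := by
      have := hp.reverse
      rw [hpr] at this
      exact this.of_cons
    have hlen : p.length = q.length + 1 := by
      have := congrArg Walk.length hpr
      rwa [Walk.length_reverse, Walk.length_cons] at this
    have hdj0 : G.dist i j0 = q.length := by
      rw [tree_dist_eq hT q.reverse hqpath.reverse, Walk.length_reverse]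
    have hdk : G.dist i k = q.length + 1 := by rw [← hpl, hlen]
    refine ⟨j0, h, by rw [hdj0, hdk], ?_⟩
    intro j hjk hjne
    have hjs : j ∉ p.support := by
      intro hmem
      have hr : (p.dropUntil j hmem).IsPath := hp.dropUntil hmem
      have hs : (Walk.cons hjk.symm Walk.nil : G.Walk j k).IsPath := by
        simp [Walk.cons_isPath_iff, hjk.ne']
      have heq : p.dropUntil j hmem = Walk.cons hjk.symm Walk.nil :=
        (hT.existsUnique_path j k).unique hr hs
      have h2 : p.reverse = Walk.cons hjk ((p.takeUntil j hmem).reverse) := by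
        conv_lhs => rw [← p.take_spec hmem, heq]
        simp [Walk.reverse_append, Walk.reverse_cons]
      rw [hpr] at h2
      have h3 := congrArg Walk.support h2
      rw [Walk.support_cons, Walk.support_cons, q.support_eq_cons,
        Walk.support_eq_cons ((p.takeUntil j hmem).reverse)] at h3
      simp only [List.cons.injEq, true_and] at h3
      exact hjne h3.1.symm
    -- the walk i → k → j is a path of length `dist i k + 1`
    have hconc : (p.concat hjk).IsPath := by
      rw [← Walk.isPath_reverse_iff, Walk.reverse_concat]
      refine Walk.IsPath.cons hp.reverse ?_
      rwa [Walk.support_reverse, List.mem_reverse]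
    rw [tree_dist_eq hT _ hconc, Walk.length_concat, hpl]

private lemma tree_key {V : Type*} [Fintype V] [DecidableEq V]
    (G : SimpleGraph V) (hT : G.IsTree) (q : ℝ) :
    expDist G q * qLap G q = (1 - q ^ 2) • (1 : Matrix V V ℝ) := by
  classical
  ext i k
  have hentry : ∀ j, qLap G q j k =
      (if j = k then 1 + q ^ 2 * ((G.degree k : ℝ) - 1) else 0)
        - q * (if G.Adj j k then 1 else 0) := by
    intro j
    by_cases hjk : j = k
    · subst hjk
      simp [qLap, Matrix.add_apply, Matrix.sub_apply, Matrix.smul_apply, Matrix.one_apply,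
        Matrix.diagonal_apply_eq, Matrix.of_apply, G.irrefl,
        Set.ncard_eq_toFinset_card', ← neighborFinset_def, card_neighborFinset_eq_degree]
      try ring
    · simp [qLap, Matrix.add_apply, Matrix.sub_apply, Matrix.smul_apply, Matrix.one_apply,
        Matrix.diagonal_apply_ne _ hjk, Matrix.of_apply, hjk]
  rw [Matrix.mul_apply]
  simp only [hentry, expDist, Matrix.of_apply]
  rw [Finset.sum_congr rfl (fun j _ => mul_sub (q ^ G.dist i j) _ _), Finset.sum_sub_distrib]
  have hA : ∑ j : V, q ^ G.dist i j * (if j = k then 1 + q ^ 2 * ((G.degree k : ℝ) - 1) else 0)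
      = q ^ G.dist i k * (1 + q ^ 2 * ((G.degree k : ℝ) - 1)) := by
    rw [Finset.sum_eq_single k]
    · simp
    · intro j _ hjk; simp [hjk]
    · intro hk; exact absurd (Finset.mem_univ k) hk
  have hB : ∑ j : V, q ^ G.dist i j * (q * (if G.Adj j k then 1 else 0))
      = q * ∑ j ∈ G.neighborFinset k, q ^ G.dist i j := by
    rw [Finset.mul_sum]
    rw [show (G.neighborFinset k : Finset V) = Finset.univ.filter (fun j => G.Adj j k) by
      ext j; simp [mem_neighborFinset, adj_comm]]
    rw [Finset.sum_filter]
    refine Finset.sum_congr rfl fun j _ => ?_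
    by_cases hj : G.Adj j k <;> simp [hj] <;> ring
  rw [hA, hB]
  rcases eq_or_ne i k with hik | hik
  · subst hik
    have hS : ∑ j ∈ G.neighborFinset i, q ^ G.dist i j = (G.degree i : ℝ) * q := by
      rw [Finset.sum_congr rfl (fun j hj => by
        rw [show G.dist i j = 1 from (dist_eq_one_iff_adj).2 ((mem_neighborFinset _ _ _).1 hj)])]
      simp [card_neighborFinset_eq_degree, pow_one, mul_comm]
    rw [hS, SimpleGraph.dist_self, pow_zero, Matrix.smul_apply, Matrix.one_apply_eq,
      smul_eq_mul]
    ring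
  · obtain ⟨j0, hj0, hd0, hrest⟩ := tree_neighbor hT hik
    have hj0mem : j0 ∈ G.neighborFinset k := (mem_neighborFinset _ _ _).2 hj0
    set m := G.dist i j0 with hm
    have hdk : G.dist i k = m + 1 := hd0.symm
    have hS : ∑ j ∈ G.neighborFinset k, q ^ G.dist i j
        = q ^ m + ((G.degree k : ℝ) - 1) * q ^ (m + 2) := by
      rw [← Finset.add_sum_erase _ _ hj0mem]
      congr 1
      rw [Finset.sum_congr rfl (fun j hj => by
        have hjmem := Finset.mem_of_mem_erase hj
        have hjne := Finset.ne_of_mem_erase hj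
        rw [hrest j ((mem_neighborFinset _ _ _).1 hjmem) hjne, hdk])]
      rw [Finset.sum_const, Finset.card_erase_of_mem hj0mem, card_neighborFinset_eq_degree]
      have hdeg : 1 ≤ G.degree k := by
        rw [← card_neighborFinset_eq_degree]
        exact Finset.card_pos.2 ⟨j0, hj0mem⟩
      rw [nsmul_eq_mul, Nat.cast_sub hdeg, Nat.cast_one]
    rw [hS, hdk, Matrix.smul_apply, Matrix.one_apply_ne hik, smul_zero]
    ring

theorem expDist_eigenvalues {V : Type*} [Fintype V] [DecidableEq V]
    (G : SimpleGraph V) (hT : G.IsTree) (q : ℝ) (hq1 : q ≠ 1) (hq2 : q ≠ -1) :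
    (∀ μ ∈ spectrum ℝ (expDist G q), ∃ l ∈ spectrum ℝ (qLap G q), μ = (1 - q ^ 2) / l) ∧
      (∀ l ∈ spectrum ℝ (qLap G q), l ≠ 0) := by
  classical
  set c : ℝ := 1 - q ^ 2 with hc
  have hcne : c ≠ 0 := by
    intro h
    have h2 : (q - 1) * (q + 1) = 0 := by rw [hc] at h; nlinarith [h]
    rcases mul_eq_zero.mp h2 with h3 | h3
    · exact hq1 (by linarith)
    · exact hq2 (by linarith)
  have hkey : expDist G q * qLap G q = c • (1 : Matrix V V ℝ) := tree_key G hT q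
  have hdetprod : (expDist G q).det * (qLap G q).det = c ^ Fintype.card V := by
    rw [← Matrix.det_mul, hkey, Matrix.det_smul, Matrix.det_one, mul_one]
  have hdetED : (expDist G q).det ≠ 0 := by
    intro h
    apply pow_ne_zero (Fintype.card V) hcne
    rw [← hdetprod, h, zero_mul]
  have hdetL : (qLap G q).det ≠ 0 := by
    intro h
    apply pow_ne_zero (Fintype.card V) hcne
    rw [← hdetprod, h, mul_zero]
  have hmem_iff : ∀ (M : Matrix V V ℝ) (μ : ℝ),
      μ ∈ spectrum ℝ M ↔ (μ • (1 : Matrix V V ℝ) - M).det = 0 := by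
    intro M μ
    rw [spectrum.mem_iff, Algebra.algebraMap_eq_smul_one]
    constructor
    · intro h
      by_contra hd
      exact h ((Matrix.isUnit_iff_isUnit_det _).2 (isUnit_iff_ne_zero.2 hd))
    · intro h hu
      exact ((Matrix.isUnit_iff_isUnit_det _).1 hu).ne_zero h
  constructor
  · intro μ hμ
    have hμdet : (μ • (1 : Matrix V V ℝ) - expDist G q).det = 0 := (hmem_iff _ μ).1 hμ
    have hμne : μ ≠ 0 := by
      intro h
      subst h
      rw [zero_smul, zero_sub, Matrix.det_neg] at hμdet
      rcases mul_eq_zero.mp hμdet with h1 | h1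
      · exact pow_ne_zero _ (by norm_num : (-1:ℝ) ≠ 0) h1
      · exact hdetED h1
    refine ⟨c / μ, ?_, by field_simp⟩
    rw [hmem_iff]
    have hfac : expDist G q * ((c / μ) • (1 : Matrix V V ℝ) - qLap G q)
        = (c / μ) • (expDist G q - μ • (1 : Matrix V V ℝ)) := by
      rw [Matrix.mul_sub, hkey, Matrix.mul_smul, Matrix.mul_one, smul_sub, smul_smul]
      rw [div_mul_cancel₀ c hμne]
    have hdet2 : (expDist G q).det * ((c / μ) • (1 : Matrix V V ℝ) - qLap G q).det
        = (c / μ) ^ Fintype.card V * (expDist G q - μ • (1 : Matrix V V ℝ)).det := by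
      rw [← Matrix.det_mul, hfac, Matrix.det_smul]
    have hz : (expDist G q - μ • (1 : Matrix V V ℝ)).det = 0 := by
      have : expDist G q - μ • (1 : Matrix V V ℝ)
          = -(μ • (1 : Matrix V V ℝ) - expDist G q) := (neg_sub _ _).symm
      rw [this, Matrix.det_neg, hμdet, mul_zero]
    rw [hz, mul_zero] at hdet2
    exact (mul_eq_zero.mp hdet2).resolve_left hdetED
  · intro l hl h0
    subst h0
    have := (hmem_iff _ 0).1 hl
    rw [zero_smul, zero_sub, Matrix.det_neg] at this
    rcases mul_eq_zero.mp this with h1 | h1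
    · exact absurd h1 (pow_ne_zero _ (by norm_num : (-1:ℝ) ≠ 0))
    · exact hdetL h1
end

section
/- Let T be a tree on n vertices and q a nonzero real number. Then the smallest eigenvalue of the q-Laplacian L_T^q has algebraic multiplicity 1. -/
open Matrix SimpleGraph

namespace QLapAux

open Polynomial Finset

variable {V : Type*} [Fintype V] [DecidableEq V]

/-! ### Characteristic polynomial of a real symmetric matrix -/

lemma charpoly_conj' (U A B : Matrix V V ℝ) (h1 : U * B = 1) (h2 : B * U = 1) :
    (U * A * B).charpoly = A.charpoly := by
  set f := (RingHom.mapMatrix (m := V) (C : ℝ →+* ℝ[X])) with hf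
  have hcomm : Matrix.scalar V (X : ℝ[X]) * f U = f U * Matrix.scalar V (X : ℝ[X]) := by
    rw [hf, RingHom.mapMatrix_apply]
    exact (scalar_commute (X : ℝ[X]) (fun r' => Commute.all _ _) (U.map C)).eq
  have hUB : f U * f B = 1 := by rw [← _root_.map_mul, h1, _root_.map_one]
  have hscal : (Matrix.scalar V (X : ℝ[X])) = f U * Matrix.scalar V (X : ℝ[X]) * f B := by
    rw [← hcomm, mul_assoc, hUB, mul_one]
  have key : charmatrix (U * A * B) = f U * charmatrix A * f B := by
    rw [charmatrix, charmatrix, _root_.map_mul, _root_.map_mul, mul_sub, sub_mul, ← hscal]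
  have hdet : (f U).det * (f B).det = 1 := by rw [← Matrix.det_mul, hUB, Matrix.det_one]
  rw [Matrix.charpoly, Matrix.charpoly, key, Matrix.det_mul, Matrix.det_mul]
  calc (f U).det * (charmatrix A).det * (f B).det
      = (f U).det * (f B).det * (charmatrix A).det := by ring
    _ = (charmatrix A).det := by rw [hdet, one_mul]

lemma spectral_real {A : Matrix V V ℝ} (hA : A.IsHermitian) :
    A = (hA.eigenvectorUnitary : Matrix V V ℝ) * Matrix.diagonal hA.eigenvalues
      * (hA.eigenvectorUnitary : Matrix V V ℝ)ᵀ := by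
  have hd : (Matrix.diagonal (RCLike.ofReal ∘ hA.eigenvalues) : Matrix V V ℝ)
      = Matrix.diagonal hA.eigenvalues := by congr 1
  have hstar : star (hA.eigenvectorUnitary : Matrix V V ℝ)
      = (hA.eigenvectorUnitary : Matrix V V ℝ)ᵀ := by
    ext i j; simp [Matrix.star_apply]
  conv_lhs => rw [hA.spectral_theorem]
  rw [hd, Unitary.conjStarAlgAut_apply, hstar]

lemma unitary_mul_transpose {A : Matrix V V ℝ} (hA : A.IsHermitian) :
    (hA.eigenvectorUnitary : Matrix V V ℝ) * (hA.eigenvectorUnitary : Matrix V V ℝ)ᵀ = 1 := by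
  have hstar : star (hA.eigenvectorUnitary : Matrix V V ℝ)
      = (hA.eigenvectorUnitary : Matrix V V ℝ)ᵀ := by
    ext i j; simp [Matrix.star_apply]
  rw [← hstar]; exact (Matrix.mem_unitaryGroup_iff).mp hA.eigenvectorUnitary.2

lemma transpose_mul_unitary {A : Matrix V V ℝ} (hA : A.IsHermitian) :
    (hA.eigenvectorUnitary : Matrix V V ℝ)ᵀ * (hA.eigenvectorUnitary : Matrix V V ℝ) = 1 := by
  have hstar : star (hA.eigenvectorUnitary : Matrix V V ℝ)
      = (hA.eigenvectorUnitary : Matrix V V ℝ)ᵀ := by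
    ext i j; simp [Matrix.star_apply]
  rw [← hstar]; exact (Matrix.mem_unitaryGroup_iff').mp hA.eigenvectorUnitary.2

lemma charpoly_hermitian_eq {A : Matrix V V ℝ} (hA : A.IsHermitian) :
    A.charpoly = ∏ i, (X - C (hA.eigenvalues i)) := by
  calc A.charpoly
      = ((hA.eigenvectorUnitary : Matrix V V ℝ) * Matrix.diagonal hA.eigenvalues
          * (hA.eigenvectorUnitary : Matrix V V ℝ)ᵀ).charpoly := by
        conv_lhs => rw [spectral_real hA]
    _ = (Matrix.diagonal hA.eigenvalues).charpoly :=
        charpoly_conj' _ _ _ (unitary_mul_transpose hA) (transpose_mul_unitary hA)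
    _ = ∏ i, (X - C (hA.eigenvalues i)) := by
        have : charmatrix (Matrix.diagonal hA.eigenvalues)
            = Matrix.diagonal (fun i => X - C (hA.eigenvalues i)) := by
          ext i j
          by_cases h : i = j <;> simp [charmatrix_apply, Matrix.diagonal_apply, h]
        rw [Matrix.charpoly, this, Matrix.det_diagonal]

lemma roots_charpoly_hermitian {A : Matrix V V ℝ} (hA : A.IsHermitian) :
    A.charpoly.roots = Finset.univ.val.map hA.eigenvalues := by
  rw [charpoly_hermitian_eq hA]
  rw [Polynomial.roots_prod _ _ (by
    apply Finset.prod_ne_zero_iff.mpr; intro i _; exact X_sub_C_ne_zero _)]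
  simp [Polynomial.roots_X_sub_C]

/-! ### Rayleigh quotient lemmas -/

section Rayleigh

variable {A : Matrix V V ℝ} (hA : A.IsHermitian)

lemma quadform_eq_sum (x : V → ℝ) :
    x ⬝ᵥ (A *ᵥ x) = ∑ j, hA.eigenvalues j *
      (((hA.eigenvectorUnitary : Matrix V V ℝ)ᵀ *ᵥ x) j)^2 := by
  set U := (hA.eigenvectorUnitary : Matrix V V ℝ)
  set c := Uᵀ *ᵥ x with hc
  calc x ⬝ᵥ (A *ᵥ x)
      = x ⬝ᵥ (U *ᵥ (Matrix.diagonal hA.eigenvalues *ᵥ (Uᵀ *ᵥ x))) := by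
        conv_lhs => rw [spectral_real hA, ← Matrix.mulVec_mulVec, ← Matrix.mulVec_mulVec]
    _ = c ⬝ᵥ (Matrix.diagonal hA.eigenvalues *ᵥ c) := by
        rw [Matrix.dotProduct_mulVec, ← Matrix.mulVec_transpose, hc]
    _ = ∑ j, hA.eigenvalues j * (c j)^2 := by
        simp only [dotProduct, Matrix.mulVec_diagonal]
        exact Finset.sum_congr rfl fun j _ => by ring

lemma normsq_eq_sum (x : V → ℝ) :
    x ⬝ᵥ x = ∑ j, (((hA.eigenvectorUnitary : Matrix V V ℝ)ᵀ *ᵥ x) j)^2 := by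
  set U := (hA.eigenvectorUnitary : Matrix V V ℝ)
  set c := Uᵀ *ᵥ x with hc
  have hx : U *ᵥ c = x := by
    rw [hc, Matrix.mulVec_mulVec, unitary_mul_transpose hA, Matrix.one_mulVec]
  calc x ⬝ᵥ x = (U *ᵥ c) ⬝ᵥ (U *ᵥ c) := by rw [hx]
    _ = (Uᵀ *ᵥ (U *ᵥ c)) ⬝ᵥ c := by
        rw [Matrix.dotProduct_mulVec, ← Matrix.mulVec_transpose]
    _ = c ⬝ᵥ c := by rw [Matrix.mulVec_mulVec, transpose_mul_unitary hA, Matrix.one_mulVec]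
    _ = ∑ j, (c j)^2 := by simp [dotProduct, pow_two]

lemma rayleigh_lower {lam : ℝ} (hlam : ∀ j, lam ≤ hA.eigenvalues j) (x : V → ℝ) :
    lam * (x ⬝ᵥ x) ≤ x ⬝ᵥ (A *ᵥ x) := by
  rw [quadform_eq_sum hA, normsq_eq_sum hA, Finset.mul_sum]
  exact Finset.sum_le_sum fun j _ => by
    have := sq_nonneg (((hA.eigenvectorUnitary : Matrix V V ℝ)ᵀ *ᵥ x) j)
    nlinarith [hlam j]

lemma rayleigh_eq_eigen {lam : ℝ} (hlam : ∀ j, lam ≤ hA.eigenvalues j) (x : V → ℝ)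
    (heq : x ⬝ᵥ (A *ᵥ x) = lam * (x ⬝ᵥ x)) : A *ᵥ x = lam • x := by
  set U := (hA.eigenvectorUnitary : Matrix V V ℝ)
  set c := Uᵀ *ᵥ x with hc
  have hkey : ∀ j, hA.eigenvalues j * c j = lam * c j := by
    have hsum : ∑ j, (hA.eigenvalues j - lam) * (c j)^2 = 0 := by
      have h1 := quadform_eq_sum hA x
      have h2 := normsq_eq_sum hA x
      simp only [sub_mul, Finset.sum_sub_distrib]
      rw [← hc] at h1 h2
      rw [← h1, ← Finset.mul_sum, ← h2, heq, sub_self]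
    have hterm : ∀ j ∈ Finset.univ, (0:ℝ) ≤ (hA.eigenvalues j - lam) * (c j)^2 :=
      fun j _ => mul_nonneg (by linarith [hlam j]) (sq_nonneg _)
    have := (Finset.sum_eq_zero_iff_of_nonneg hterm).mp hsum
    intro j
    have hj := this j (Finset.mem_univ j)
    rcases mul_eq_zero.mp hj with h | h
    · nlinarith [h]
    · have : c j = 0 := by nlinarith [h]
      rw [this]; ring
  have hx : U *ᵥ c = x := by
    rw [hc, Matrix.mulVec_mulVec, unitary_mul_transpose hA, Matrix.one_mulVec]
  calc A *ᵥ x = U *ᵥ (Matrix.diagonal hA.eigenvalues *ᵥ (Uᵀ *ᵥ x)) := by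
        conv_lhs => rw [spectral_real hA, ← Matrix.mulVec_mulVec, ← Matrix.mulVec_mulVec]
    _ = U *ᵥ (lam • c) := by
        have : Matrix.diagonal hA.eigenvalues *ᵥ (Uᵀ *ᵥ x) = lam • c := by
          funext j
          rw [Matrix.mulVec_diagonal, ← hc, hkey j]
          simp
        rw [this]
    _ = lam • x := by rw [Matrix.mulVec_smul, hx]

end Rayleigh

/-! ### Paths in trees and the bipartite sign -/

lemma concat_isPath {G : SimpleGraph V} {a b : V} {r : V} (p : G.Walk r a) (hp : p.IsPath)
    (hab : G.Adj a b) (hb : b ∉ p.support) : (p.concat hab).IsPath := by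
  rw [← SimpleGraph.Walk.isPath_reverse_iff, SimpleGraph.Walk.reverse_concat]
  rw [SimpleGraph.Walk.cons_isPath_iff]
  constructor
  · rwa [SimpleGraph.Walk.isPath_reverse_iff]
  · rwa [SimpleGraph.Walk.support_reverse, List.mem_reverse]

/-- Length of the unique path between two vertices of a tree. -/
noncomputable def tlen {G : SimpleGraph V} (hT : G.IsTree) (r v : V) : ℕ :=
  (hT.existsUnique_path r v).choose.length

lemma tlen_eq {G : SimpleGraph V} (hT : G.IsTree) (r v : V) (p : G.Walk r v) (hp : p.IsPath) :
    tlen hT r v = p.length := by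
  rw [tlen, (hT.existsUnique_path r v).choose_spec.2 p hp]

lemma tree_len_parity {G : SimpleGraph V} (hT : G.IsTree) (r a b : V) (hab : G.Adj a b) :
    tlen hT r b = tlen hT r a + 1 ∨ tlen hT r a = tlen hT r b + 1 := by
  obtain ⟨hp, -⟩ := (hT.existsUnique_path r a).choose_spec
  set p := (hT.existsUnique_path r a).choose with hpdef
  by_cases hb : b ∈ p.support
  · right
    have ht : (p.takeUntil b hb).IsPath := hp.takeUntil hb
    have hd : (p.dropUntil b hb).IsPath := hp.dropUntil hb
    have hdl : (p.dropUntil b hb).length = 1 := by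
      have := hT.IsAcyclic.path_unique ⟨p.dropUntil b hb, hd⟩ (SimpleGraph.Path.singleton hab.symm)
      have := congrArg (fun x : G.Path b a => (x : G.Walk b a).length) this
      simpa [SimpleGraph.Path.singleton] using this
    have h1 : tlen hT r b = (p.takeUntil b hb).length := tlen_eq hT r b _ ht
    have h2 : tlen hT r a = p.length := rfl
    have h3 : p.length = (p.takeUntil b hb).length + (p.dropUntil b hb).length := by
      conv_lhs => rw [← SimpleGraph.Walk.take_spec p hb]
      rw [SimpleGraph.Walk.length_append]
    rw [h1, h2, h3, hdl]
  · left
    have hq : (p.concat hab).IsPath := concat_isPath p hp hab hb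
    have h4 := tlen_eq hT r b _ hq
    have h2 : tlen hT r a = p.length := tlen_eq hT r a p hp
    rw [h4, SimpleGraph.Walk.length_concat, h2]

/-! ### Entries of the `q`-Laplacian -/

open Classical in
lemma qLap_apply_ne (G : SimpleGraph V) (q : ℝ) {i j : V} (h : i ≠ j) :
    qLap G q i j = if G.Adj i j then -q else 0 := by
  simp [qLap, Matrix.add_apply, Matrix.sub_apply, Matrix.smul_apply, Matrix.one_apply_ne h,
    Matrix.diagonal_apply_ne _ h]
  by_cases hadj : G.Adj i j <;> simp [hadj]

open Classical in
lemma qLap_isHermitian (G : SimpleGraph V) (q : ℝ) : (qLap G q).IsHermitian := by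
  rw [Matrix.IsHermitian]
  ext i j
  rw [Matrix.conjTranspose_apply]
  by_cases h : i = j
  · subst h; simp
  · rw [qLap_apply_ne G q (Ne.symm h), qLap_apply_ne G q h, G.adj_comm]
    by_cases hadj : G.Adj i j <;> simp [hadj]

/-! ### The key lemma: an eigenvector for the minimal eigenvalue with a zero entry vanishes -/

lemma key_zero {G : SimpleGraph V} (hT : G.IsTree) {q : ℝ} (hq : q ≠ 0)
    (hH : (qLap G q).IsHermitian) {lam : ℝ} (hlam : ∀ j, lam ≤ hH.eigenvalues j)
    (x : V → ℝ) (hx : qLap G q *ᵥ x = lam • x) {i₀ : V} (hx0 : x i₀ = 0) : x = 0 := by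
  classical
  set M := qLap G q with hM
  -- the sign pattern
  set s : V → ℝ := fun v => if 0 < q then 1 else (if Even (tlen hT i₀ v) then 1 else -1)
    with hs
  have hs2 : ∀ v, s v * s v = 1 := by
    intro v; rw [hs]; dsimp only; split_ifs <;> norm_num
  have hsne : ∀ v, s v ≠ 0 := by
    intro v; rw [hs]; dsimp only; split_ifs <;> norm_num
  have hsadj : ∀ a b, G.Adj a b → q * (s a * s b) = |q| := by
    intro a b hadj
    by_cases hq0 : 0 < q
    · rw [hs]; dsimp only; rw [if_pos hq0, if_pos hq0, abs_of_pos hq0]; ring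
    · have hqneg : q < 0 := lt_of_le_of_ne (not_lt.mp hq0) hq
      have hpar : ¬ (Even (tlen hT i₀ a) ↔ Even (tlen hT i₀ b)) := by
        rcases tree_len_parity hT i₀ a b hadj with h | h <;>
          rw [h, Nat.even_add_one] <;> tauto
      have : s a * s b = -1 := by
        rw [hs]; dsimp only; rw [if_neg hq0, if_neg hq0]
        by_cases ha : Even (tlen hT i₀ a) <;> by_cases hb : Even (tlen hT i₀ b) <;>
          simp [ha, hb] at hpar ⊢ <;> tauto
      rw [this, abs_of_neg hqneg]; ring
  -- the rectified vector
  set y : V → ℝ := fun v => s v * |x v| with hy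
  have hyy : y ⬝ᵥ y = x ⬝ᵥ x := by
    apply Finset.sum_congr rfl
    intro v _
    rw [hy]; dsimp only
    calc s v * |x v| * (s v * |x v|) = (s v * s v) * (|x v| * |x v|) := by ring
      _ = x v * x v := by rw [hs2, abs_mul_abs_self, one_mul]
  have hray_x : x ⬝ᵥ (M *ᵥ x) = lam * (x ⬝ᵥ x) := by
    rw [hx, dotProduct_smul, smul_eq_mul]
  have expand : ∀ z : V → ℝ, z ⬝ᵥ (M *ᵥ z) = ∑ v, ∑ w, M v w * (z v * z w) := by
    intro z
    unfold dotProduct Matrix.mulVec dotProduct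
    apply Finset.sum_congr rfl
    intro v _
    rw [Finset.mul_sum]
    exact Finset.sum_congr rfl fun w _ => by ring
  have hterm_le : ∀ v w, M v w * (y v * y w) ≤ M v w * (x v * x w) := by
    intro v w
    by_cases hvw : v = w
    · subst hvw
      have : y v * y v = x v * x v := by
        rw [hy]; dsimp only
        calc s v * |x v| * (s v * |x v|) = (s v * s v) * (|x v| * |x v|) := by ring
          _ = x v * x v := by rw [hs2, abs_mul_abs_self, one_mul]
      rw [this]
    · rw [hM, qLap_apply_ne G q hvw]
      by_cases hadj : G.Adj v w
      · rw [if_pos hadj]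
        have h1 : -q * (y v * y w) = -(q * (s v * s w)) * (|x v| * |x w|) := by
          rw [hy]; dsimp only; ring
        rw [h1, hsadj v w hadj]
        have h2 : q * (x v * x w) ≤ |q| * (|x v| * |x w|) := by
          calc q * (x v * x w) ≤ |q * (x v * x w)| := le_abs_self _
            _ = |q| * (|x v| * |x w|) := by rw [abs_mul, abs_mul]
        linarith
      · rw [if_neg hadj]; ring_nf; exact le_refl _
  have hquad_le : y ⬝ᵥ (M *ᵥ y) ≤ x ⬝ᵥ (M *ᵥ x) := by
    rw [expand y, expand x]
    exact Finset.sum_le_sum fun v _ => Finset.sum_le_sum fun w _ => hterm_le v w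
  have heq : y ⬝ᵥ (M *ᵥ y) = lam * (y ⬝ᵥ y) := by
    have h1 := rayleigh_lower hH hlam y
    have h2 : lam * (y ⬝ᵥ y) = lam * (x ⬝ᵥ x) := by rw [hyy]
    linarith [hquad_le, hray_x]
  have hMy : M *ᵥ y = lam • y := rayleigh_eq_eigen hH hlam y heq
  -- zero entries propagate to neighbours
  have step : ∀ v, x v = 0 → ∀ w, G.Adj v w → x w = 0 := by
    intro v hv w hadj
    have hyv : y v = 0 := by rw [hy]; dsimp only; rw [hv]; simp
    have hrow : ∑ w', M v w' * y w' = 0 := by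
      have : (M *ᵥ y) v = lam * y v := by rw [hMy]; simp
      rw [hyv, mul_zero] at this
      exact this
    have h0 : ∑ w', (-(s v)) * (M v w' * y w') = 0 := by
      rw [← Finset.mul_sum, hrow, mul_zero]
    have hterm_eq : ∀ w', G.Adj v w' → (-(s v)) * (M v w' * y w') = |q| * |x w'| := by
      intro w' hadj'
      have hne : v ≠ w' := G.ne_of_adj hadj'
      rw [hM, qLap_apply_ne G q hne, if_pos hadj', hy]; dsimp only
      have : -(s v) * (-q * (s w' * |x w'|)) = (q * (s v * s w')) * |x w'| := by ring
      rw [this, hsadj v w' hadj']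
    have hterm_nonneg : ∀ w' ∈ Finset.univ, (0:ℝ) ≤ (-(s v)) * (M v w' * y w') := by
      intro w' _
      by_cases hvw : v = w'
      · subst hvw; rw [hyv]; simp
      · by_cases hadj' : G.Adj v w'
        · rw [hterm_eq w' hadj']
          exact mul_nonneg (abs_nonneg _) (abs_nonneg _)
        · rw [hM, qLap_apply_ne G q hvw, if_neg hadj']; simp
    have hall := (Finset.sum_eq_zero_iff_of_nonneg hterm_nonneg).mp h0
    have := hall w (Finset.mem_univ w)
    rw [hterm_eq w hadj] at this
    have hq' : |q| ≠ 0 := abs_ne_zero.mpr hq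
    have : |x w| = 0 := by
      rcases mul_eq_zero.mp this with h | h
      · exact absurd h hq'
      · exact h
    exact abs_eq_zero.mp this
  -- propagate along walks
  have walkprop : ∀ (u v : V) (p : G.Walk u v), x u = 0 → x v = 0 := by
    intro u v p
    induction p with
    | nil => exact id
    | cons h p ih => intro hu; exact ih (step _ hu _ h)
  funext v
  exact walkprop i₀ v (hT.isConnected.preconnected i₀ v).some hx0

open RealInnerProductSpace in
lemma dot_eigenvectorBasis_self {A : Matrix V V ℝ} (hA : A.IsHermitian) (i : V) :
    ⇑(hA.eigenvectorBasis i) ⬝ᵥ ⇑(hA.eigenvectorBasis i) = 1 := by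
  have h1 := hA.eigenvectorBasis.orthonormal.1 i
  have h2 : ⟪hA.eigenvectorBasis i, hA.eigenvectorBasis i⟫ = (1:ℝ) := by
    rw [real_inner_self_eq_norm_sq, h1]; norm_num
  rw [EuclideanSpace.inner_eq_star_dotProduct] at h2
  simpa [dotProduct] using h2

open RealInnerProductSpace in
lemma dot_eigenvectorBasis_ne {A : Matrix V V ℝ} (hA : A.IsHermitian) {i j : V} (hij : i ≠ j) :
    ⇑(hA.eigenvectorBasis i) ⬝ᵥ ⇑(hA.eigenvectorBasis j) = 0 := by
  have h2 : ⟪hA.eigenvectorBasis i, hA.eigenvectorBasis j⟫ = (0:ℝ) :=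
    hA.eigenvectorBasis.orthonormal.2 hij
  rw [EuclideanSpace.inner_eq_star_dotProduct] at h2
  rw [dotProduct_comm]
  simpa [dotProduct] using h2

end QLapAux

/- For a tree and `q ≠ 0`, the smallest eigenvalue of the `q`-Laplacian has algebraic
multiplicity `1`: its multiplicity as a root of the characteristic polynomial is one. -/
theorem qLap_min_eigenvalue_multiplicity_one {V : Type*} [Fintype V] [DecidableEq V]
    (G : SimpleGraph V) (hT : G.IsTree) (q : ℝ) (hq : q ≠ 0)
    (lam : ℝ) (hmem : lam ∈ (qLap G q).charpoly.roots)
    (hmin : ∀ μ ∈ (qLap G q).charpoly.roots, lam ≤ μ) :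
    ((qLap G q).charpoly.roots).count lam = 1 := by
  classical
  have hH : (qLap G q).IsHermitian := QLapAux.qLap_isHermitian G q
  set e := hH.eigenvalues with he
  have hroots : (qLap G q).charpoly.roots = Finset.univ.val.map e :=
    QLapAux.roots_charpoly_hermitian hH
  have hmin' : ∀ j, lam ≤ e j := by
    intro j
    apply hmin
    rw [hroots]
    exact Multiset.mem_map.mpr ⟨j, by simp, rfl⟩
  have hex : ∃ i, e i = lam := by
    rw [hroots] at hmem
    obtain ⟨i, _, hi⟩ := Multiset.mem_map.mp hmem
    exact ⟨i, hi⟩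
  obtain ⟨i, hi⟩ := hex
  -- uniqueness of the index achieving the minimum
  have huniq : ∀ j, e j = lam → j = i := by
    intro j hj
    by_contra hij
    -- two orthonormal eigenvectors for `lam`
    set u : V → ℝ := ⇑(hH.eigenvectorBasis i) with hu
    set w : V → ℝ := ⇑(hH.eigenvectorBasis j) with hw
    have hue : qLap G q *ᵥ u = lam • u := by
      rw [hu, hH.mulVec_eigenvectorBasis i, ← he, hi]
    have hwe : qLap G q *ᵥ w = lam • w := by
      rw [hw, hH.mulVec_eigenvectorBasis j, ← he, hj]
    have huu : u ⬝ᵥ u = 1 := QLapAux.dot_eigenvectorBasis_self hH i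
    have hww : w ⬝ᵥ w = 1 := QLapAux.dot_eigenvectorBasis_self hH j
    have huw : u ⬝ᵥ w = 0 := QLapAux.dot_eigenvectorBasis_ne hH (fun h => hij h.symm)
    -- a coordinate where `u` does not vanish
    have hu0 : u ≠ 0 := by
      intro h; rw [h] at huu; simp [dotProduct] at huu
    obtain ⟨k, hk⟩ := Function.ne_iff.mp hu0
    have hk : u k ≠ 0 := hk
    have hwk : w k ≠ 0 := by
      intro hwk0
      have := QLapAux.key_zero hT hq hH hmin' w hwe hwk0
      rw [this] at hww; simp [dotProduct] at hww
    -- linear combination vanishing at `k`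
    set z : V → ℝ := w k • u - u k • w with hz
    have hze : qLap G q *ᵥ z = lam • z := by
      rw [hz, Matrix.mulVec_sub, Matrix.mulVec_smul, Matrix.mulVec_smul, hue, hwe,
        smul_comm (w k) lam, smul_comm (u k) lam, smul_sub]
    have hzk : z k = 0 := by rw [hz]; simp [mul_comm]
    have hz0 : z = 0 := QLapAux.key_zero hT hq hH hmin' z hze hzk
    -- contradiction with orthogonality
    have : u ⬝ᵥ z = 0 := by rw [hz0]; simp [dotProduct]
    rw [hz, dotProduct_sub, dotProduct_smul, dotProduct_smul,
      huu, huw] at this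
    have hwk0 : w k = 0 := by
      rw [smul_eq_mul, smul_eq_mul, mul_one, mul_zero, sub_zero] at this
      exact this
    exact hwk hwk0
  rw [hroots, Multiset.count_map]
  have hfilter : (Finset.univ.val.filter fun a => lam = e a) = {i} := by
    rw [show (Finset.univ.val.filter fun a => lam = e a)
        = (Finset.univ.filter fun a => lam = e a).val from rfl]
    rw [show ({i} : Multiset V) = ({i} : Finset V).val from rfl]
    congr 1
    apply Finset.eq_singleton_iff_unique_mem.mpr
    constructor
    · exact Finset.mem_filter.mpr ⟨Finset.mem_univ i, hi.symm⟩
    · intro x hx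
      exact huniq x (Finset.mem_filter.mp hx).2.symm
  rw [hfilter]
  simp
end

section
/- Let T be a tree and T' any subtree of T. Then for all real q, the largest eigenvalue of L_{T'}^q is at most the largest eigenvalue of L_T^q. -/
open Matrix SimpleGraph

lemma qLap_isHermitian {V : Type*} [Fintype V] [DecidableEq V]
    (G : SimpleGraph V) (q : ℝ) : (qLap G q).IsHermitian := by
  classical
  unfold Matrix.IsHermitian
  ext i j
  simp only [qLap, conjTranspose_apply, Matrix.add_apply, Matrix.sub_apply, Matrix.smul_apply,
    Matrix.one_apply, Matrix.diagonal_apply, Matrix.of_apply, star_trivial]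
  rw [G.adj_comm]
  by_cases h : i = j <;> simp [h, eq_comm]

lemma exists_eigenvec {n : Type*} [Fintype n] [DecidableEq n] {B : Matrix n n ℝ} {μ : ℝ}
    (h : μ ∈ spectrum ℝ B) : ∃ y : n → ℝ, y ≠ 0 ∧ B *ᵥ y = μ • y := by
  rw [spectrum.mem_iff, Matrix.isUnit_iff_isUnit_det, isUnit_iff_ne_zero, not_not] at h
  obtain ⟨y, hy, hy0⟩ := (Matrix.exists_mulVec_eq_zero_iff).2 h
  refine ⟨y, hy, ?_⟩
  have halg : (algebraMap ℝ (Matrix n n ℝ)) μ = μ • (1 : Matrix n n ℝ) :=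
    Algebra.algebraMap_eq_smul_one μ
  rw [halg, Matrix.sub_mulVec, Matrix.smul_mulVec,
    Matrix.one_mulVec, sub_eq_zero] at hy0
  exact hy0.symm

lemma quadForm_le_sSup_spectrum {n : Type*} [Fintype n] [DecidableEq n] [Nonempty n]
    {A : Matrix n n ℝ} (hA : A.IsHermitian) (x : n → ℝ) :
    x ⬝ᵥ (A *ᵥ x) ≤ sSup (spectrum ℝ A) * (x ⬝ᵥ x) := by
  classical
  set U := (hA.eigenvectorUnitary : Matrix n n ℝ) with hU
  set c := star U *ᵥ x with hcdef
  have hUc : U * star U = 1 := (Matrix.mem_unitaryGroup_iff).mp hA.eigenvectorUnitary.2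
  have hc : x ᵥ* U = c := by
    have h1 := Matrix.star_mulVec (star U) x
    simp only [star_trivial, Matrix.star_eq_conjTranspose,
      Matrix.conjTranspose_conjTranspose] at h1
    exact h1.symm
  have hM : ∀ i, hA.eigenvalues i ≤ sSup (spectrum ℝ A) := fun i =>
    le_csSup (A.finite_spectrum.bddAbove) (hA.eigenvalues_mem_spectrum_real i)
  have key : x ⬝ᵥ (A *ᵥ x) = ∑ i, hA.eigenvalues i * (c i)^2 := by
    conv_lhs => rw [hA.spectral_theorem, Unitary.conjStarAlgAut_apply]
    rw [← Matrix.mulVec_mulVec, ← Matrix.mulVec_mulVec, Matrix.dotProduct_mulVec x U, hc]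
    simp [Matrix.mulVec_diagonal, dotProduct, mul_comm, sq, mul_assoc, mul_left_comm, hcdef, hU]
  have hcc : c ⬝ᵥ c = x ⬝ᵥ x := by
    rw [dotProduct_comm]
    rw [hcdef]
    rw [Matrix.dotProduct_mulVec]
    congr 1
    have h2 := Matrix.star_mulVec U c
    simp only [star_trivial] at h2
    have h3 : U *ᵥ c = x := by
      rw [hcdef, Matrix.mulVec_mulVec, hUc, Matrix.one_mulVec]
    rw [h3] at h2
    simpa [Matrix.star_eq_conjTranspose, hcdef] using h2.symm
  calc x ⬝ᵥ (A *ᵥ x) = ∑ i, hA.eigenvalues i * (c i)^2 := key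
    _ ≤ ∑ i, sSup (spectrum ℝ A) * (c i)^2 :=
        Finset.sum_le_sum fun i _ => mul_le_mul_of_nonneg_right (hM i) (sq_nonneg _)
    _ = sSup (spectrum ℝ A) * (c ⬝ᵥ c) := by
        simp [dotProduct, Finset.mul_sum, sq, mul_assoc]
    _ = sSup (spectrum ℝ A) * (x ⬝ᵥ x) := by rw [hcc]

open Classical in
lemma qLap_quadForm {W : Type*} [Fintype W] [DecidableEq W] (H : SimpleGraph W) (q : ℝ)
    (z : W → ℝ) :
    z ⬝ᵥ (qLap H q *ᵥ z) = (z ⬝ᵥ z)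
      + q ^ 2 * ((∑ w, ((H.neighborSet w).ncard : ℝ) * (z w) ^ 2) - z ⬝ᵥ z)
      - q * (∑ w, z w * ∑ u, (if H.Adj w u then (1 : ℝ) else 0) * z u) := by
  classical
  simp only [qLap, Matrix.sub_mulVec, Matrix.add_mulVec, Matrix.smul_mulVec,
    Matrix.one_mulVec, dotProduct_sub, dotProduct_add, dotProduct_smul,
    smul_eq_mul]
  have hdiag : z ⬝ᵥ (Matrix.diagonal (fun i => ((H.neighborSet i).ncard : ℝ)) *ᵥ z)
      = ∑ w, ((H.neighborSet w).ncard : ℝ) * (z w) ^ 2 := by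
    simp only [dotProduct, Matrix.mulVec_diagonal]
    exact Finset.sum_congr rfl fun w _ => by ring
  have hadj : z ⬝ᵥ ((Matrix.of fun i j => if H.Adj i j then (1 : ℝ) else 0) *ᵥ z)
      = ∑ w, z w * ∑ u, (if H.Adj w u then (1 : ℝ) else 0) * z u := rfl
  rw [hdiag, hadj]

/- A subtree of a tree is modelled as a connected induced subgraph on a vertex subset `s`
(connected subgraphs of trees are induced).  The largest eigenvalue of the `q`-Laplacian of
the subtree is at most that of the whole tree; the largest eigenvalue of a matrix is `sSup`
of its spectrum. -/
theorem qLap_subtree_max_eigenvalue_le {V : Type*} [Fintype V] [DecidableEq V]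
    (G : SimpleGraph V) (hT : G.IsTree) (s : Set V) [DecidablePred (· ∈ s)]
    (hs : (G.induce s).Connected) (q : ℝ) :
    sSup (spectrum ℝ (qLap (G.induce s) q)) ≤ sSup (spectrum ℝ (qLap G q)) := by
  classical
  haveI : Nonempty ↥s := hs.nonempty
  haveI : Nonempty V := ⟨(Classical.arbitrary ↥s : ↥s).1⟩
  have hB := qLap_isHermitian (G.induce s) q
  have hA := qLap_isHermitian G q
  have hne : (spectrum ℝ (qLap (G.induce s) q)).Nonempty :=
    ⟨_, hB.eigenvalues_mem_spectrum_real (Classical.arbitrary _)⟩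
  refine csSup_le hne ?_
  intro μ hμ
  obtain ⟨y, hy0, hy⟩ := exists_eigenvec hμ
  set x : V → ℝ := fun v => if h : v ∈ s then y ⟨v, h⟩ else 0 with hxdef
  have hxs : ∀ i : ↥s, x ↑i = y i := fun i => by simp [hxdef]
  have hx0 : ∀ v ∉ s, x v = 0 := fun v hv => dif_neg hv
  have sum_supp : ∀ f : V → ℝ, (∀ v ∉ s, f v = 0) → ∑ v, f v = ∑ i : ↥s, f ↑i := by
    intro f hf
    rw [Finset.sum_set_coe]
    exact (Finset.sum_subset s.toFinset.subset_univ
      (fun v _ hv => hf v (by simpa using hv))).symm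
  have hxx : x ⬝ᵥ x = y ⬝ᵥ y := by
    have h := sum_supp (fun v => x v * x v) (fun v hv => by simp [hx0 v hv])
    simpa [dotProduct, hxs] using h
  have hadj_eq : (∑ v, x v * ∑ u, (if G.Adj v u then (1 : ℝ) else 0) * x u)
      = ∑ i : ↥s, y i * ∑ j : ↥s, (if (G.induce s).Adj i j then (1 : ℝ) else 0) * y j := by
    rw [sum_supp _ (fun v hv => by simp [hx0 v hv])]
    refine Finset.sum_congr rfl fun i _ => ?_
    rw [hxs]
    congr 1
    rw [sum_supp (fun u => (if G.Adj ↑i u then (1 : ℝ) else 0) * x u)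
      (fun u hu => by simp [hx0 u hu])]
    refine Finset.sum_congr rfl fun j _ => ?_
    rw [hxs]
    simp [SimpleGraph.comap_adj]
  have hdeg : ∀ i : ↥s, (((G.induce s).neighborSet i).ncard : ℝ)
      ≤ ((G.neighborSet (↑i : V)).ncard : ℝ) := by
    intro i
    have hsub : Subtype.val '' ((G.induce s).neighborSet i) ⊆ G.neighborSet (↑i : V) := by
      rintro _ ⟨j, hj, rfl⟩
      exact hj
    have h := Set.ncard_le_ncard hsub (Set.toFinite _)
    rw [Set.ncard_image_of_injective _ Subtype.val_injective] at h
    exact_mod_cast h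
  have hdiag_le : (∑ i : ↥s, (((G.induce s).neighborSet i).ncard : ℝ) * (y i) ^ 2)
      ≤ ∑ v, ((G.neighborSet v).ncard : ℝ) * (x v) ^ 2 := by
    rw [sum_supp (fun v => ((G.neighborSet v).ncard : ℝ) * (x v) ^ 2)
      (fun v hv => by simp [hx0 v hv])]
    refine Finset.sum_le_sum fun i _ => ?_
    rw [hxs]
    exact mul_le_mul_of_nonneg_right (hdeg i) (sq_nonneg _)
  have hBx : y ⬝ᵥ (qLap (G.induce s) q *ᵥ y) ≤ x ⬝ᵥ (qLap G q *ᵥ x) := by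
    erw [qLap_quadForm, qLap_quadForm, hxx, ← hadj_eq]
    have h2 : q ^ 2 * ((∑ i : ↥s, (((G.induce s).neighborSet i).ncard : ℝ) * (y i) ^ 2) - y ⬝ᵥ y)
        ≤ q ^ 2 * ((∑ v, ((G.neighborSet v).ncard : ℝ) * (x v) ^ 2) - y ⬝ᵥ y) :=
      mul_le_mul_of_nonneg_left (by linarith) (sq_nonneg q)
    linarith
  have hyy_pos : 0 < y ⬝ᵥ y := by
    rcases (Finset.sum_nonneg fun i _ => mul_self_nonneg (y i) :
        (0:ℝ) ≤ y ⬝ᵥ y).lt_or_eq with h | h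
    · exact h
    · exact absurd (dotProduct_self_eq_zero.mp h.symm) hy0
  have hmu : μ * (y ⬝ᵥ y) = y ⬝ᵥ (qLap (G.induce s) q *ᵥ y) := by
    rw [hy, dotProduct_smul, smul_eq_mul]
  have hray := quadForm_le_sSup_spectrum hA x
  rw [hxx] at hray
  have : μ * (y ⬝ᵥ y) ≤ sSup (spectrum ℝ (qLap G q)) * (y ⬝ᵥ y) := by
    rw [hmu]; exact le_trans hBx hray
  exact le_of_mul_le_mul_right this hyy_pos
end

section
/- Let S_n be the star tree on n ≥ 2 vertices (one center adjacent to n-1 leaves). Then the characteristic polynomial of its q-Laplacian L_{S_n}^q is det(xI - L_{S_n}^q) = (x-1)^{n-2} · [x^2 - (2 + (n-2)q^2)x - q^2 + 1]. -/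
open Matrix SimpleGraph

section ArrowDet

open Matrix

variable {R : Type*} [CommRing R]

/-- Determinant of the "border" minor appearing in the arrowhead expansion. -/
lemma detB_aux (n : ℕ) (b c : R) :
    (Matrix.of fun i j : Fin (n+1) => if (i : ℕ) = (j : ℕ) + 1 then b
        else if i = 0 then c else 0).det = (-1) ^ n * (c * b ^ n) := by
  rw [Matrix.det_succ_column _ (Fin.last n)]
  rw [Fintype.sum_eq_single 0]
  · have h1 : ((Matrix.of fun i j : Fin (n+1) => if (i : ℕ) = (j : ℕ) + 1 then b
        else if i = 0 then c else 0).submatrix (Fin.succAbove 0) (Fin.succAbove (Fin.last n)))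
        = Matrix.diagonal (fun _ => b) := by
      ext i j
      simp only [Matrix.submatrix_apply, Matrix.of_apply, Matrix.diagonal_apply, Fin.succAbove_zero,
        Fin.succAbove_last, Fin.val_succ, Fin.coe_castSucc, Fin.succ_ne_zero, if_false, Fin.ext_iff,
        Nat.add_right_cancel_iff, Fin.val_zero, Nat.succ_ne_zero, if_false]
    rw [h1, Matrix.det_diagonal]
    simp [Fin.val_last]
    ring
  · intro i hi
    have : ¬ ((i : ℕ) = (Fin.last n : ℕ) + 1) := by
      have := i.isLt; simp [Fin.val_last]; omega
    have h0 : i ≠ 0 := hi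
    simp only [Fin.val_last] at this
    simp [this, h0]

/-- Determinant of an arrowhead matrix with head `a`, diagonal `b` and arms `c`. -/
lemma arrow_det (n : ℕ) (a b c : R) :
    (Matrix.of fun i j : Fin (n+1) => if i = j then (if i = 0 then a else b)
        else if i = 0 ∨ j = 0 then c else 0).det
      = b ^ n * a - (n : R) * (c ^ 2 * b ^ (n - 1)) := by
  induction n with
  | zero => simp [Matrix.det_fin_one]
  | succ n ih =>
    rw [Matrix.det_succ_row _ (Fin.last (n+1))]
    rw [Fin.sum_univ_succ]
    rw [Fintype.sum_eq_single (Fin.last n)]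
    · have hlast0 : (Fin.last (n+1) : Fin (n+2)) ≠ 0 := by
        simp [Fin.ext_iff]
      have e0 : (Matrix.of fun i j : Fin (n+2) => if i = j then (if i = 0 then a else b)
          else if i = 0 ∨ j = 0 then c else 0) (Fin.last (n+1)) 0 = c := by
        simp [hlast0]
      have m0 : ((Matrix.of fun i j : Fin (n+2) => if i = j then (if i = 0 then a else b)
          else if i = 0 ∨ j = 0 then c else 0).submatrix
            (Fin.succAbove (Fin.last (n+1))) (Fin.succAbove 0))
          = Matrix.of (fun i j : Fin (n+1) => if (i : ℕ) = (j : ℕ) + 1 then b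
              else if i = 0 then c else 0) := by
        refine Matrix.ext fun i j => ?_
        simp only [Matrix.submatrix_apply, Fin.succAbove_last, Fin.succAbove_zero,
          Matrix.of_apply]
        by_cases h : (Fin.castSucc i) = (Fin.succ j)
        · have h' : (i : ℕ) = (j : ℕ) + 1 := by simpa [Fin.ext_iff] using h
          have h0 : ¬ (Fin.castSucc i = 0) := by
            simp only [Fin.ext_iff, Fin.coe_castSucc, Fin.val_zero]; omega
          rw [if_pos h, if_neg h0, if_pos h']
        · have h' : ¬ ((i : ℕ) = (j : ℕ) + 1) := by simpa [Fin.ext_iff] using h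
          rw [if_neg h, if_neg h']
          by_cases h0 : i = 0
          · subst h0; simp
          · have hd : ¬ (Fin.castSucc i = 0 ∨ Fin.succ j = 0) := by
              simp [Fin.succ_ne_zero, Fin.castSucc_eq_zero_iff, h0]
            rw [if_neg hd, if_neg h0]
      have elast : (Matrix.of fun i j : Fin (n+2) => if i = j then (if i = 0 then a else b)
          else if i = 0 ∨ j = 0 then c else 0) (Fin.last (n+1)) ((Fin.last n).succ) = b := by
        rw [Fin.succ_last]
        simp [hlast0]
      have mlast : ((Matrix.of fun i j : Fin (n+2) => if i = j then (if i = 0 then a else b)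
          else if i = 0 ∨ j = 0 then c else 0).submatrix
            (Fin.succAbove (Fin.last (n+1))) (Fin.succAbove ((Fin.last n).succ)))
          = Matrix.of (fun i j : Fin (n+1) => if i = j then (if i = 0 then a else b)
              else if i = 0 ∨ j = 0 then c else 0) := by
        rw [Fin.succ_last]
        refine Matrix.ext fun i j => ?_
        simp only [Matrix.submatrix_apply, Fin.succAbove_last, Matrix.of_apply,
          Fin.castSucc_inj, Fin.castSucc_eq_zero_iff]
      rw [e0, m0, elast, mlast, detB_aux, ih]
      simp only [Fin.val_last, Fin.val_zero, Fin.succ_last, Nat.add_zero, Nat.add_sub_cancel]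
      have hs1 : ((-1 : R)) ^ (n + 1) * c * ((-1:R) ^ n * (c * b ^ n)) = -(c^2 * b^n) := by
        have h3 : ((-1:R))^(n+1) * (-1:R)^n = -1 := by
          rw [← pow_add]
          have h2 : n + 1 + n = 2*n + 1 := by omega
          rw [h2, pow_succ, pow_mul]
          norm_num
        calc ((-1 : R)) ^ (n + 1) * c * ((-1:R) ^ n * (c * b ^ n))
            = ((-1:R))^(n+1) * (-1:R)^n * (c * (c * b ^ n)) := by ring
          _ = -(c^2 * b^n) := by rw [h3]; ring
      have hs2 : ((-1 : R)) ^ (n + 1 + (n + 1)) = 1 := by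
        have h2 : n + 1 + (n + 1) = 2*(n+1) := by omega
        rw [h2, pow_mul]
        norm_num
      rw [hs1, hs2]
      cases n with
      | zero => push_cast; ring
      | succ k =>
        simp only [Nat.add_sub_cancel]
        push_cast
        ring
    · intro j hj
      have hjn : (j : ℕ) ≠ n := by simpa [Fin.ext_iff, Fin.val_last] using hj
      have h2 : ¬ ((Fin.last (n+1) : Fin (n+2)) = j.succ) := by
        simp [Fin.ext_iff]; omega
      have h3 : ((j.succ : Fin (n+2)) ≠ 0) := Fin.succ_ne_zero j
      have h4 : ¬ ((Fin.last (n+1) : Fin (n+2)) = 0) := by simp [Fin.ext_iff]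
      simp [h2, h3, h4]

end ArrowDet

/- The star on `m+2` vertices: vertex `0` is adjacent to every other vertex. -/
def starGraph (m : ℕ) : SimpleGraph (Fin (m + 2)) :=
  SimpleGraph.fromRel (fun i _ => i = 0)

lemma starGraph_ncard_zero (m : ℕ) : ((_root_.starGraph m).neighborSet 0).ncard = m + 1 := by
  have h : (_root_.starGraph m).neighborSet 0 = {(0 : Fin (m+2))}ᶜ := by
    ext j
    simp [_root_.starGraph, SimpleGraph.fromRel_adj, eq_comm]
  rw [h, Set.ncard_eq_toFinset_card']
  simp [Finset.card_compl]

lemma starGraph_ncard_ne_zero (m : ℕ) (i : Fin (m+2)) (hi : i ≠ 0) :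
    ((_root_.starGraph m).neighborSet i).ncard = 1 := by
  have h : (_root_.starGraph m).neighborSet i = {(0 : Fin (m+2))} := by
    ext j
    simp only [SimpleGraph.mem_neighborSet, _root_.starGraph, SimpleGraph.fromRel_adj,
      Set.mem_singleton_iff]
    constructor
    · rintro ⟨hne, h0 | h0⟩
      · exact absurd h0 hi
      · exact h0
    · rintro rfl
      exact ⟨hi, Or.inr rfl⟩
  rw [h, Set.ncard_singleton]

lemma qLap_star_off_diag (m : ℕ) (q : ℝ) (i j : Fin (m+2)) (hij : i ≠ j) :
    qLap (_root_.starGraph m) q i j = if i = 0 ∨ j = 0 then -q else 0 := by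
  simp only [qLap, Matrix.sub_apply, Matrix.add_apply, Matrix.smul_apply, Matrix.one_apply,
    Matrix.diagonal_apply, Matrix.of_apply, if_neg hij, _root_.starGraph, SimpleGraph.fromRel_adj]
  simp [hij, smul_eq_mul]
  split_ifs <;> first | tauto | simp

lemma qLap_star_diag (m : ℕ) (q : ℝ) (i : Fin (m+2)) :
    qLap (_root_.starGraph m) q i i = if i = 0 then 1 + q^2 * m else 1 := by
  have hnoadj : ¬ (_root_.starGraph m).Adj i i := SimpleGraph.irrefl _
  simp only [qLap, Matrix.sub_apply, Matrix.add_apply, Matrix.smul_apply, Matrix.one_apply,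
    Matrix.diagonal_apply, Matrix.of_apply, if_pos rfl, if_neg hnoadj, smul_eq_mul]
  by_cases hi : i = 0
  · subst hi
    rw [starGraph_ncard_zero m]
    simp only [if_true, reduceIte]
    push_cast
    ring
  · rw [starGraph_ncard_ne_zero m i hi]
    simp [hi]

open Polynomial in
theorem charpoly_qLap_star (m : ℕ) (q : ℝ) :
    (qLap (_root_.starGraph m) q).charpoly =
      (X - 1) ^ m * (X ^ 2 - C (2 + (m : ℝ) * q ^ 2) * X + C (1 - q ^ 2)) := by
  have hchar : charmatrix (qLap (_root_.starGraph m) q)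
      = Matrix.of (fun i j : Fin (m+1+1) => if i = j
          then (if i = 0 then (X : ℝ[X]) - C (1 + q^2 * m) else X - 1)
          else if i = 0 ∨ j = 0 then C q else 0) := by
    refine Matrix.ext fun i j => ?_
    by_cases hij : i = j
    · subst hij
      rw [charmatrix_apply_eq, qLap_star_diag, Matrix.of_apply, if_pos rfl]
      by_cases hi : i = 0
      · simp [hi]
      · simp [hi]
    · rw [charmatrix_apply_ne _ _ _ hij, qLap_star_off_diag m q i j hij, Matrix.of_apply,
        if_neg hij]
      by_cases h : i = 0 ∨ j = 0
      · simp [h]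
      · simp [h]
  rw [Matrix.charpoly, hchar, arrow_det (m+1)]
  push_cast
  simp only [Nat.add_sub_cancel, map_add, _root_.map_mul, map_sub, _root_.map_one, map_pow,
    map_natCast, map_ofNat, Polynomial.C_1]
  ring
end

section
/- Let T be a tree on n vertices, v a vertex of T, and let L_T^q|v be the principal submatrix of L_T^q obtained by deleting the row and column indexed by v. Then the characteristic polynomial of L_T^q|v evaluated at 0 satisfies det(0·I - L_T^q|v) = (-1)^{n-1}; equivalently, det(L_T^q|v) = 1 for every real q. -/
open Matrix SimpleGraph

section Aux

variable {V : Type*} [DecidableEq V] {G : SimpleGraph V}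

private lemma aux_support_dist_le (v w x : V) (p : G.Walk w v) (hp : p.length = G.dist w v)
    (hx : x ∈ p.support) : G.dist x v ≤ G.dist w v := by
  have hsplit := p.take_spec hx
  have hlen : (p.takeUntil x hx).length + (p.dropUntil x hx).length = p.length := by
    conv_rhs => rw [← hsplit]
    rw [SimpleGraph.Walk.length_append]
  have h1 := SimpleGraph.dist_le (p.dropUntil x hx)
  omega

private lemma aux_support_dist_lt (v w x : V) (p : G.Walk w v) (hp : p.length = G.dist w v)
    (hx : x ∈ p.support) (hxw : x ≠ w) : G.dist x v < G.dist w v := by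
  have hsplit := p.take_spec hx
  have hlen : (p.takeUntil x hx).length + (p.dropUntil x hx).length = p.length := by
    conv_rhs => rw [← hsplit]
    rw [SimpleGraph.Walk.length_append]
  have h1 := SimpleGraph.dist_le (p.dropUntil x hx)
  have h2 : (p.takeUntil x hx).length ≠ 0 := fun h =>
    hxw (SimpleGraph.Walk.eq_of_length_eq_zero h).symm
  omega

private lemma aux_adj_dist_ne (hT : G.IsTree) (v : V) {u w : V} (h : G.Adj u w) :
    G.dist u v ≠ G.dist w v := by
  intro he
  obtain ⟨p, hp, hpl⟩ := hT.isConnected.exists_path_of_dist u v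
  obtain ⟨p', hp', hpl'⟩ := hT.isConnected.exists_path_of_dist w v
  have hu : u ∉ p'.support := by
    intro hu
    have := aux_support_dist_lt v w u p' hpl' hu h.ne
    omega
  have hq : (p'.cons h).IsPath := hp'.cons hu
  have heq := (hT.existsUnique_path u v).unique hp hq
  have hl : p.length = (p'.cons h).length := by rw [heq]
  simp [SimpleGraph.Walk.length_cons] at hl
  omega

private lemma aux_parent_unique (hT : G.IsTree) (v : V) {u w₁ w₂ : V} (h₁ : G.Adj u w₁)
    (h₂ : G.Adj u w₂) (hd₁ : G.dist w₁ v < G.dist u v) (hd₂ : G.dist w₂ v < G.dist u v) :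
    w₁ = w₂ := by
  obtain ⟨p₁, hp₁, hpl₁⟩ := hT.isConnected.exists_path_of_dist w₁ v
  obtain ⟨p₂, hp₂, hpl₂⟩ := hT.isConnected.exists_path_of_dist w₂ v
  have hu₁ : u ∉ p₁.support := fun hu => by
    have := aux_support_dist_le v w₁ u p₁ hpl₁ hu; omega
  have hu₂ : u ∉ p₂.support := fun hu => by
    have := aux_support_dist_le v w₂ u p₂ hpl₂ hu; omega
  have heq := (hT.existsUnique_path u v).unique (y₁ := Walk.cons h₁ p₁) (y₂ := Walk.cons h₂ p₂)
    (hp₁.cons hu₁) (hp₂.cons hu₂)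
  have := congrArg (fun q => SimpleGraph.Walk.getVert q 1) heq
  simpa [SimpleGraph.Walk.getVert_cons_succ] using this

private lemma aux_parent_exists (hc : G.Connected) {u v : V} (huv : u ≠ v) :
    ∃ w, G.Adj u w ∧ G.dist w v + 1 = G.dist u v := by
  obtain ⟨p, hpl⟩ := hc.exists_walk_length_eq_dist u v
  have hpos : 0 < G.dist u v := hc.pos_dist_of_ne huv
  cases p with
  | nil => simp at hpl; simp_all
  | cons h q =>
    rename_i x
    refine ⟨x, h, ?_⟩
    have h1 : G.dist x v ≤ q.length := SimpleGraph.dist_le q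
    have h2 : G.dist u v ≤ G.dist u x + G.dist x v := hc.dist_triangle
    have h3 : G.dist u x = 1 := (SimpleGraph.dist_eq_one_iff_adj).2 h
    simp [SimpleGraph.Walk.length_cons] at hpl
    omega

end Aux

open Polynomial in
/- Deleting the row and column of a vertex `v` from the `q`-Laplacian of a tree gives a
matrix of determinant `1`; equivalently its characteristic polynomial evaluated at `0`
equals `(-1)^(n-1)`. -/
theorem det_qLap_delete_vertex {V : Type*} [Fintype V] [DecidableEq V]
    (G : SimpleGraph V) (hT : G.IsTree) (hn : 2 ≤ Fintype.card V) (v : V) (q : ℝ) :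
    ((qLap G q).submatrix (Subtype.val : {w : V // w ≠ v} → V) Subtype.val).det = 1 ∧
      (((qLap G q).submatrix (Subtype.val : {w : V // w ≠ v} → V) Subtype.val).charpoly).eval 0
        = (-1 : ℝ) ^ (Fintype.card V - 1) := by
  classical
  have hc := hT.isConnected
  -- the parent function toward the root `v`
  choose par hadj hdist using fun u : {w : V // w ≠ v} => aux_parent_exists hc u.2
  -- basic facts
  have hpos : ∀ u : {w : V // w ≠ v}, 0 < G.dist u.val v := fun u => hc.pos_dist_of_ne u.2
  have hparne : ∀ u : {w : V // w ≠ v}, par u ≠ u.val := fun u => (hadj u).ne'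
  -- adjacency characterization
  have hnb : ∀ (u : {w : V // w ≠ v}) (w : V),
      G.Adj u.val w ↔ (w = par u ∨ ∃ h : w ≠ v, par ⟨w, h⟩ = u.val) := by
    intro u w
    constructor
    · intro h
      have hne : G.dist u.val v ≠ G.dist w v := aux_adj_dist_ne hT v h
      have ht1 : G.dist w v ≤ G.dist w u.val + G.dist u.val v := hc.dist_triangle
      have ht2 : G.dist u.val v ≤ G.dist u.val w + G.dist w v := hc.dist_triangle
      have h1 : G.dist u.val w = 1 := (SimpleGraph.dist_eq_one_iff_adj).2 h
      have h1' : G.dist w u.val = 1 := (SimpleGraph.dist_eq_one_iff_adj).2 h.symm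
      rcases lt_or_gt_of_ne hne with hlt | hgt
      · -- dist u < dist w : u is the parent of w
        right
        have hwv : w ≠ v := by
          intro rfl'
          subst rfl'
          simp [SimpleGraph.dist_self] at hlt
        refine ⟨hwv, ?_⟩
        have hd2 : G.dist (par ⟨w, hwv⟩) v + 1 = G.dist w v := hdist ⟨w, hwv⟩
        have ha2 : G.Adj w (par ⟨w, hwv⟩) := hadj ⟨w, hwv⟩
        exact aux_parent_unique hT v ha2 h.symm (by omega) (by omega)
      · -- dist w < dist u : w is the parent of u
        left
        have hd2 : G.dist (par u) v + 1 = G.dist u.val v := hdist u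
        exact aux_parent_unique hT v h (hadj u) (by omega) (by omega)
    · rintro (rfl | ⟨hw, hp⟩)
      · exact hadj u
      · exact (hp ▸ hadj ⟨w, hw⟩).symm
  -- the parent relation is antisymmetric (can't have both directions)
  have hnotboth : ∀ (u : {w : V // w ≠ v}) (w : V) (hw : w ≠ v),
      par u = w → par ⟨w, hw⟩ = u.val → False := by
    intro u w hw h1 h2
    have d1 := hdist u
    have d2 : G.dist (par ⟨w, hw⟩) v + 1 = G.dist w v := hdist ⟨w, hw⟩
    rw [h1] at d1
    rw [h2] at d2
    omega
  -- degree count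
  have hdeg : ∀ u : {w : V // w ≠ v},
      ((G.neighborSet u.val).ncard : ℝ) =
        1 + ((Finset.univ.filter (fun x : {w : V // w ≠ v} => par x = u.val)).card : ℝ) := by
    intro u
    have hfin : G.neighborFinset u.val =
        insert (par u) ((Finset.univ.filter
          (fun x : {w : V // w ≠ v} => par x = u.val)).image Subtype.val) := by
      ext w
      simp only [SimpleGraph.mem_neighborFinset, Finset.mem_insert, Finset.mem_image,
        Finset.mem_filter, Finset.mem_univ, true_and]
      rw [hnb u w]
      constructor
      · rintro (rfl | ⟨hw, hp⟩)
        · exact Or.inl rfl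
        · exact Or.inr ⟨⟨w, hw⟩, hp, rfl⟩
      · rintro (rfl | ⟨x, hp, rfl⟩)
        · exact Or.inl rfl
        · exact Or.inr ⟨x.2, by simpa using hp⟩
    have hmem : par u ∉ (Finset.univ.filter
        (fun x : {w : V // w ≠ v} => par x = u.val)).image Subtype.val := by
      intro hmem
      obtain ⟨x, hx, hxv⟩ := Finset.mem_image.1 hmem
      rw [Finset.mem_filter] at hx
      exact hnotboth u x.val x.2 (by simpa using hxv.symm) (by simpa using hx.2)
    have hcard : (G.neighborFinset u.val).card =
        1 + (Finset.univ.filter (fun x : {w : V // w ≠ v} => par x = u.val)).card := by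
      rw [hfin, Finset.card_insert_of_notMem hmem,
        Finset.card_image_of_injective _ Subtype.val_injective]
      omega
    have hncard : (G.neighborSet u.val).ncard = (G.neighborFinset u.val).card := by
      rw [SimpleGraph.neighborFinset_def, Set.ncard_eq_toFinset_card']
    rw [hncard, hcard]
    push_cast
    ring
  -- the "parent incidence" matrix
  set N : Matrix {w : V // w ≠ v} {w : V // w ≠ v} ℝ :=
    Matrix.of (fun i j => (if i = j then (1 : ℝ) else 0)
      - q * (if par i = j.val then 1 else 0)) with hN
  -- the factorization
  have hfact : (qLap G q).submatrix (Subtype.val : {w : V // w ≠ v} → V) Subtype.val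
      = Nᵀ * N := by
    ext i j
    rw [Matrix.mul_apply]
    simp only [Matrix.submatrix_apply, Matrix.transpose_apply]
    rcases eq_or_ne i j with rfl | hij
    · -- diagonal entry
      have hterm : ∀ x : {w : V // w ≠ v}, N x i * N x i =
          (if x = i then (1 : ℝ) else 0) + q ^ 2 * (if par x = i.val then 1 else 0) := by
        intro x
        rcases eq_or_ne x i with rfl | hxi
        · simp [hN, hparne x, fun h : par x = x.val => (hparne x) h]
        · simp only [hN, Matrix.of_apply, if_neg hxi]
          rcases eq_or_ne (par x) i.val with hp | hp
          · simp [hp]; ring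
          · simp [hp]
      rw [Finset.sum_congr rfl (fun x _ => hterm x)]
      rw [Finset.sum_add_distrib, ← Finset.mul_sum, Finset.sum_ite_eq' Finset.univ i
        (fun _ => (1:ℝ)), Finset.sum_boole]
      simp only [Finset.mem_univ, if_true]
      have hd := hdeg i
      simp only [qLap, Matrix.sub_apply, Matrix.add_apply, Matrix.one_apply_eq,
        Matrix.smul_apply, Matrix.diagonal_apply_eq, Matrix.of_apply,
        SimpleGraph.irrefl, if_false, smul_eq_mul, mul_zero, sub_zero]
      rw [hd]
      push_cast
      ring
    · -- off-diagonal entry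
      have hvibne : i.val ≠ j.val := fun h => hij (Subtype.ext h)
      have hterm : ∀ x : {w : V // w ≠ v}, N x i * N x j =
          (if x = i then -q * (if par i = j.val then 1 else 0) else 0)
          + (if x = j then -q * (if par j = i.val then 1 else 0) else 0) := by
        intro x
        rcases eq_or_ne x i with rfl | hxi
        · simp [hN, if_neg hij, fun h : par x = x.val => (hparne x) h]
          split_ifs <;> ring
        · rcases eq_or_ne x j with rfl | hxj
          · simp [hN, if_neg (Ne.symm hij), if_neg hxi,
              fun h : par x = x.val => (hparne x) h]
            split_ifs <;> ring
          · simp only [hN, Matrix.of_apply, if_neg hxi, if_neg hxj, zero_sub]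
            have : ¬(par x = i.val ∧ par x = j.val) := by
              rintro ⟨h1, h2⟩; exact hvibne (h1 ▸ h2)
            rcases eq_or_ne (par x) i.val with hp | hp
            · have : par x ≠ j.val := fun h2 => this ⟨hp, h2⟩
              simp [hp, this, hvibne]
            · simp [hp]
      rw [Finset.sum_congr rfl (fun x _ => hterm x), Finset.sum_add_distrib,
        Finset.sum_ite_eq' Finset.univ i, Finset.sum_ite_eq' Finset.univ j]
      simp only [Finset.mem_univ, if_true]
      simp only [qLap, Matrix.sub_apply, Matrix.add_apply, Matrix.one_apply_ne hvibne,
        Matrix.smul_apply, Matrix.diagonal_apply_ne _ hvibne, Matrix.of_apply,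
        Matrix.one_apply_ne hvibne, smul_eq_mul, mul_zero, sub_zero, zero_add, zero_sub,
        mul_sub]
      by_cases hadjij : G.Adj i.val j.val
      · rcases (hnb i j.val).1 hadjij with hp | ⟨hw, hp⟩
        · have hp2 : par j ≠ i.val := by
            intro h2
            exact hnotboth i j.val j.2 hp.symm (by simpa using h2)
          simp [hadjij, hp.symm, hp2]
          try ring
        · have hp' : par j = i.val := by
            have : (⟨j.val, hw⟩ : {w : V // w ≠ v}) = j := Subtype.ext rfl
            rwa [this] at hp
          have hp2 : par i ≠ j.val := by
            intro h1
            exact hnotboth i j.val j.2 h1 (by simpa using hp)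
          simp [hadjij, hp', hp2]
          try ring
      · have hp1 : par i ≠ j.val := fun h => hadjij ((hnb i j.val).2 (Or.inl h.symm))
        have hp2 : par j ≠ i.val := by
          intro h
          exact hadjij ((hnb j i.val).2 (Or.inl h.symm)).symm
        simp [hadjij, hp1, hp2]
  -- determinant of N is 1 via block triangularity
  have hdetN : N.det = 1 := by
    have hbt : N.BlockTriangular (fun i => OrderDual.toDual (G.dist i.val v)) := by
      intro i j hij
      have hij' : G.dist i.val v < G.dist j.val v := hij
      have h1 : i ≠ j := fun h => by subst h; exact lt_irrefl _ hij'
      have h2 : par i ≠ j.val := by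
        intro h
        have := hdist i
        rw [h] at this
        omega
      simp [hN, h1, h2]
    rw [hbt.det]
    apply Finset.prod_eq_one
    intro a _
    have hblk : N.toSquareBlock (fun i => OrderDual.toDual (G.dist i.val v)) a = 1 := by
      ext i j
      rcases eq_or_ne i j with rfl | hij
      · simp [Matrix.toSquareBlock_def, hN, fun h : par i.val = i.val.val => hparne i.val h]
      · have hij' : i.val ≠ j.val := fun h => hij (Subtype.ext h)
        have hd : G.dist i.val.val v = G.dist j.val.val v := by
          have h1 : OrderDual.toDual (G.dist i.val.val v) = a := i.2
          have h2 : OrderDual.toDual (G.dist j.val.val v) = a := j.2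
          exact OrderDual.toDual_inj.mp (h1.trans h2.symm)
        have hp2 : par i.val ≠ j.val.val := by
          intro h
          have := hdist i.val
          rw [h, hd] at this
          omega
        simp [Matrix.toSquareBlock_def, hN, hij', hp2, Matrix.one_apply_ne hij]
    rw [hblk, Matrix.det_one]
  have hdet1 : ((qLap G q).submatrix (Subtype.val : {w : V // w ≠ v} → V) Subtype.val).det
      = 1 := by
    rw [hfact, Matrix.det_mul, Matrix.det_transpose, hdetN, mul_one]
  refine ⟨hdet1, ?_⟩
  have hcard : Fintype.card {w : V // w ≠ v} = Fintype.card V - 1 := by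
    rw [Fintype.card_subtype_compl, Fintype.card_subtype_eq]
  set M := (qLap G q).submatrix (Subtype.val : {w : V // w ≠ v} → V) Subtype.val with hM
  have hsign := Matrix.det_eq_sign_charpoly_coeff M
  rw [hdet1, Polynomial.coeff_zero_eq_eval_zero] at hsign
  have hsq : ((-1:ℝ) ^ Fintype.card {w : V // w ≠ v})
      * ((-1:ℝ) ^ Fintype.card {w : V // w ≠ v}) = 1 := by
    rw [← mul_pow]; norm_num
  have heval : M.charpoly.eval 0 = (-1:ℝ) ^ Fintype.card {w : V // w ≠ v} := by
    have h1 : M.charpoly.eval 0 = ((-1:ℝ) ^ Fintype.card {w : V // w ≠ v}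
        * (-1:ℝ) ^ Fintype.card {w : V // w ≠ v}) * M.charpoly.eval 0 := by
      rw [hsq, one_mul]
    rw [h1, mul_assoc, ← hsign, mul_one]
  rw [heval, hcard]
end

section
/- Let T be a tree on n > 1 vertices. Then for every real q, the largest eigenvalue of the q-Laplacian L_T^q is at most (2 + (n-2)q^2 + sqrt(n^2 q^4 + 4(n-1)(1-q^2)q^2))/2, which is the largest eigenvalue of the q-Laplacian of the star S_n. -/
open Matrix SimpleGraph

namespace QLapAux

open Finset

lemma exists_eigenvector {k : ℕ} {M : Matrix (Fin k) (Fin k) ℝ} {lam : ℝ}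
    (h : lam ∈ spectrum ℝ M) : ∃ x : Fin k → ℝ, x ≠ 0 ∧ M.mulVec x = lam • x := by
  rw [spectrum.mem_iff, Matrix.isUnit_iff_isUnit_det, isUnit_iff_ne_zero, not_not] at h
  obtain ⟨v, hv0, hv⟩ := Matrix.exists_mulVec_eq_zero_iff.2 h
  refine ⟨v, hv0, ?_⟩
  rw [Matrix.sub_mulVec, Algebra.algebraMap_eq_smul_one, Matrix.smul_mulVec,
    Matrix.one_mulVec, sub_eq_zero] at hv
  exact hv.symm

variable {m : ℕ} (G : SimpleGraph (Fin (m + 2))) [DecidableRel G.Adj]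

lemma degree_pos' (hc : G.Connected) (i : Fin (m + 2)) : 0 < G.degree i := by
  obtain ⟨j, hj⟩ := exists_ne i
  obtain ⟨w⟩ := hc.preconnected i j
  rw [← SimpleGraph.card_neighborFinset_eq_degree, Finset.card_pos]
  cases w with
  | nil => exact absurd rfl hj
  | cons h p => exact ⟨_, (G.mem_neighborFinset i _).2 h⟩

lemma sum_degree' (hT : G.IsTree) : ∑ i, G.degree i = 2 * (m + 1) := by
  rw [SimpleGraph.sum_degrees_eq_twice_card_edges]
  have h := hT.card_edgeFinset
  simp only [Fintype.card_fin] at h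
  omega

lemma exists_parent' (hc : G.Connected) (r v : Fin (m + 2)) (hv : v ≠ r) :
    ∃ w, G.Adj v w ∧ G.dist w r < G.dist v r := by
  obtain ⟨p, hp⟩ := (hc.preconnected v r).exists_walk_length_eq_dist
  have hd : G.dist v r ≠ 0 := by
    intro h0
    rcases SimpleGraph.dist_eq_zero_iff_eq_or_not_reachable.1 h0 with h | h
    · exact hv h
    · exact h (hc.preconnected v r)
  cases p with
  | nil => simp at hp; omega
  | cons h q =>
      refine ⟨_, h, ?_⟩
      have h1 : G.dist _ r ≤ q.length := SimpleGraph.dist_le q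
      rw [SimpleGraph.Walk.length_cons] at hp
      omega

set_option maxHeartbeats 1000000 in
lemma rooted_bound (hT : G.IsTree) (z : Fin (m + 2) → ℝ) (r : Fin (m + 2)) :
    (∑ i, ∑ j, if G.Adj i j then z i * z j else 0) ^ 2
      ≤ 4 * ((∑ i, ((G.degree i : ℝ) - 1) * z i ^ 2) + z r ^ 2)
          * ((∑ i, z i ^ 2) - z r ^ 2) := by
  classical
  have hc := hT.isConnected
  have hpar : ∀ v : Fin (m + 2), v ≠ r → ∃ w, G.Adj v w ∧ G.dist w r < G.dist v r :=
    fun v hv => exists_parent' G hc r v hv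
  set P : Fin (m + 2) → Fin (m + 2) :=
    fun v => if h : v = r then r else Classical.choose (hpar v h) with hPdef
  have hP : ∀ v, v ≠ r → G.Adj v (P v) ∧ G.dist (P v) r < G.dist v r := by
    intro v hv
    simp only [hPdef, dif_neg hv]
    exact Classical.choose_spec (hpar v hv)
  set E : Finset (Fin (m + 2) × Fin (m + 2)) :=
    (univ ×ˢ univ).filter (fun p => G.Adj p.1 p.2) with hEdef
  set S1 := (univ.erase r).image (fun v => (v, P v)) with hS1def
  set S2 := (univ.erase r).image (fun v => (P v, v)) with hS2def
  have hinj1 : ∀ x ∈ univ.erase r, ∀ y ∈ univ.erase r,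
      (x, P x) = (y, P y) → x = y := fun x _ y _ h => congrArg Prod.fst h
  have hinj2 : ∀ x ∈ univ.erase r, ∀ y ∈ univ.erase r,
      (P x, x) = (P y, y) → x = y := fun x _ y _ h => congrArg Prod.snd h
  have hS1E : S1 ⊆ E := by
    intro p hp
    simp only [hS1def, mem_image, mem_erase, mem_univ, and_true] at hp
    obtain ⟨v, hvr, rfl⟩ := hp
    simp only [hEdef, mem_filter, mem_product, mem_univ, true_and, and_true]
    exact (hP v hvr).1
  have hS2E : S2 ⊆ E := by
    intro p hp
    simp only [hS2def, mem_image, mem_erase, mem_univ, and_true] at hp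
    obtain ⟨v, hvr, rfl⟩ := hp
    simp only [hEdef, mem_filter, mem_product, mem_univ, true_and, and_true]
    exact (hP v hvr).1.symm
  have hdisj : Disjoint S1 S2 := by
    rw [Finset.disjoint_left]
    rintro ⟨a, b⟩ h1 h2
    simp only [hS1def, hS2def, mem_image, mem_erase, mem_univ, and_true,
      Prod.mk.injEq] at h1 h2
    obtain ⟨v, hvr, hv1, hv2⟩ := h1
    obtain ⟨w, hwr, hw1, hw2⟩ := h2
    have d1 := (hP v hvr).2
    have d2 := (hP w hwr).2
    have e1 : P v = w := by rw [hv2, hw2]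
    have e2 : P w = v := by rw [hw1, hv1]
    rw [e1] at d1
    rw [e2] at d2
    omega
  have hcardE : E.card = 2 * (m + 1) := by
    have h1 : E.card = ∑ i, G.degree i := by
      rw [hEdef, Finset.card_filter,
        Finset.sum_product (f := fun p : Fin (m+2) × Fin (m+2) => if G.Adj p.1 p.2 then 1 else 0)]
      refine Finset.sum_congr rfl fun i _ => ?_
      simp only []
      rw [← Finset.card_filter, ← SimpleGraph.neighborFinset_eq_filter,
        SimpleGraph.card_neighborFinset_eq_degree]
    rw [h1, sum_degree' G hT]
  have hcard_er : (univ.erase r).card = m + 1 := by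
    rw [Finset.card_erase_of_mem (mem_univ r)]
    simp
  have hcard1 : S1.card = m + 1 := by
    rw [hS1def, Finset.card_image_of_injOn fun x hx y hy h => hinj1 x hx y hy h, hcard_er]
  have hcard2 : S2.card = m + 1 := by
    rw [hS2def, Finset.card_image_of_injOn fun x hx y hy h => hinj2 x hx y hy h, hcard_er]
  have hunion : S1 ∪ S2 = E := by
    refine Finset.eq_of_subset_of_card_le (Finset.union_subset hS1E hS2E) ?_
    rw [Finset.card_union_of_disjoint hdisj, hcard1, hcard2, hcardE]
    omega
  have hTsum : (∑ i, ∑ j, if G.Adj i j then z i * z j else 0)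
      = 2 * ∑ v ∈ univ.erase r, z v * z (P v) := by
    have h1 : (∑ i, ∑ j, if G.Adj i j then z i * z j else 0)
        = ∑ p ∈ E, z p.1 * z p.2 := by
      rw [hEdef, Finset.sum_filter,
        Finset.sum_product (f := fun p : Fin (m+2) × Fin (m+2) => if G.Adj p.1 p.2 then z p.1 * z p.2 else 0)]
    rw [h1, ← hunion, Finset.sum_union hdisj, hS1def, hS2def,
      Finset.sum_image hinj1, Finset.sum_image hinj2, two_mul]
    congr 1
    exact Finset.sum_congr rfl fun v _ => mul_comm _ _
  have hCS := Finset.sum_mul_sq_le_sq_mul_sq (univ.erase r)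
      (fun v => z v) (fun v => z (P v))
  have hsum1 : ∑ v ∈ univ.erase r, z v ^ 2 = (∑ i, z i ^ 2) - z r ^ 2 := by
    have h := Finset.sum_erase_add univ (fun i => z i ^ 2) (mem_univ r)
    linarith
  have hQ : ∑ v ∈ univ.erase r, z (P v) ^ 2
      ≤ (∑ i, ((G.degree i : ℝ) - 1) * z i ^ 2) + z r ^ 2 := by
    have h0 : ∑ v ∈ univ.erase r, z (P v) ^ 2
        = ∑ b ∈ (univ.erase r).image P,
            (#(filter (fun v => P v = b) (univ.erase r))) • (z b ^ 2) :=
      Finset.sum_comp (fun b => z b ^ 2) P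
    have h2 : ∑ b ∈ (univ.erase r).image P,
            (#(filter (fun v => P v = b) (univ.erase r))) • (z b ^ 2)
        ≤ ∑ b, (#(filter (fun v => P v = b) (univ.erase r))) • (z b ^ 2) :=
      Finset.sum_le_sum_of_subset_of_nonneg (Finset.subset_univ _)
        (fun i _ _ => nsmul_nonneg (sq_nonneg _) _)
    have h3 : ∀ b : Fin (m + 2), (#(filter (fun v => P v = b) (univ.erase r))) • (z b ^ 2)
        ≤ ((G.degree b : ℝ) - 1) * z b ^ 2 + (if b = r then z b ^ 2 else 0) := by
      intro b
      rw [nsmul_eq_mul]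
      by_cases hbr : b = r
      · subst hbr
        have hsub : filter (fun v => P v = b) (univ.erase b) ⊆ G.neighborFinset b := by
          intro v hv
          simp only [mem_filter, mem_erase, mem_univ, and_true] at hv
          obtain ⟨hvr, hPv⟩ := hv
          exact (G.mem_neighborFinset b v).2 (by rw [← hPv]; exact (hP v hvr).1.symm)
        have hcard : (#(filter (fun v => P v = b) (univ.erase b)) : ℝ) ≤ (G.degree b : ℝ) := by
          exact_mod_cast le_trans (Finset.card_le_card hsub)
            (le_of_eq (SimpleGraph.card_neighborFinset_eq_degree G b))
        rw [if_pos rfl]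
        nlinarith [mul_le_mul_of_nonneg_right hcard (sq_nonneg (z b))]
      · have hsub : filter (fun v => P v = b) (univ.erase r)
            ⊆ (G.neighborFinset b).erase (P b) := by
          intro v hv
          simp only [mem_filter, mem_erase, mem_univ, and_true] at hv
          obtain ⟨hvr, hPv⟩ := hv
          rw [Finset.mem_erase]
          constructor
          · intro hvPb
            have d1 := (hP v hvr).2
            have d2 := (hP b hbr).2
            rw [hPv] at d1
            rw [← hvPb] at d2
            omega
          · exact (G.mem_neighborFinset b v).2 (by rw [← hPv]; exact (hP v hvr).1.symm)
        have hd1 : 1 ≤ G.degree b := degree_pos' G hc b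
        have hcardN : #(filter (fun v => P v = b) (univ.erase r)) ≤ G.degree b - 1 := by
          have h := Finset.card_le_card hsub
          rwa [Finset.card_erase_of_mem ((G.mem_neighborFinset b (P b)).2 (hP b hbr).1),
            SimpleGraph.card_neighborFinset_eq_degree] at h
        have hcard : (#(filter (fun v => P v = b) (univ.erase r)) : ℝ)
            ≤ (G.degree b : ℝ) - 1 := by
          have := (Nat.cast_le (α := ℝ)).2 hcardN
          rwa [Nat.cast_sub hd1, Nat.cast_one] at this
        simp only [if_neg hbr, add_zero]
        nlinarith [mul_le_mul_of_nonneg_right hcard (sq_nonneg (z b))]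
    calc ∑ v ∈ univ.erase r, z (P v) ^ 2
        ≤ ∑ b, (#(filter (fun v => P v = b) (univ.erase r))) • (z b ^ 2) := by
          rw [h0]; exact h2
      _ ≤ ∑ b, (((G.degree b : ℝ) - 1) * z b ^ 2 + (if b = r then z b ^ 2 else 0)) :=
          Finset.sum_le_sum fun b _ => h3 b
      _ = (∑ i, ((G.degree i : ℝ) - 1) * z i ^ 2) + z r ^ 2 := by
          rw [Finset.sum_add_distrib, Finset.sum_ite_eq' univ r (fun b => z b ^ 2)]
          simp
  have hE1 : (0:ℝ) ≤ ∑ v ∈ univ.erase r, z v ^ 2 :=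
    Finset.sum_nonneg fun i _ => sq_nonneg _
  have hQ0 : (0:ℝ) ≤ ∑ v ∈ univ.erase r, z (P v) ^ 2 :=
    Finset.sum_nonneg fun i _ => sq_nonneg _
  rw [hTsum]
  have step : (∑ v ∈ univ.erase r, z v * z (P v)) ^ 2
      ≤ ((∑ i, ((G.degree i : ℝ) - 1) * z i ^ 2) + z r ^ 2) * ((∑ i, z i ^ 2) - z r ^ 2) := by
    calc (∑ v ∈ univ.erase r, z v * z (P v)) ^ 2
        ≤ (∑ v ∈ univ.erase r, z v ^ 2) * (∑ v ∈ univ.erase r, z (P v) ^ 2) := hCS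
      _ ≤ (∑ v ∈ univ.erase r, z v ^ 2)
            * ((∑ i, ((G.degree i : ℝ) - 1) * z i ^ 2) + z r ^ 2) :=
          mul_le_mul_of_nonneg_left hQ hE1
      _ = ((∑ i, ((G.degree i : ℝ) - 1) * z i ^ 2) + z r ^ 2) * ((∑ i, z i ^ 2) - z r ^ 2) := by
          rw [hsum1]; ring
  nlinarith [step]


set_option maxHeartbeats 1000000 in
lemma tree_lemma (hT : G.IsTree) (hm : 1 ≤ m) (z : Fin (m + 2) → ℝ) :
    (m : ℝ) ^ 2 * (∑ i, ∑ j, if G.Adj i j then z i * z j else 0) ^ 2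
      ≤ 4 * ((m : ℝ) + 1) * (∑ i, ((G.degree i : ℝ) - 1) * z i ^ 2)
          * ((m : ℝ) * (∑ i, z i ^ 2) - ∑ i, ((G.degree i : ℝ) - 1) * z i ^ 2) := by
  classical
  have hc := hT.isConnected
  set F := ∑ i, ((G.degree i : ℝ) - 1) * z i ^ 2 with hFdef
  set N := ∑ i, z i ^ 2 with hNdef
  set T := ∑ i, ∑ j, if G.Adj i j then z i * z j else 0 with hTdef
  have hd1 : ∀ i, (1 : ℝ) ≤ (G.degree i : ℝ) := fun i => by
    exact_mod_cast degree_pos' G hc i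
  have hy0 : ∀ i : Fin (m + 2), (0:ℝ) ≤ z i ^ 2 := fun i => sq_nonneg _
  have hF0 : 0 ≤ F := Finset.sum_nonneg fun i _ =>
    mul_nonneg (by linarith [hd1 i]) (hy0 i)
  have hsumd : ∑ i, (G.degree i : ℝ) = 2 * ((m : ℝ) + 1) := by
    rw [← Nat.cast_sum, sum_degree' G hT]
    push_cast
    ring
  set NL := univ.filter (fun i => 2 ≤ G.degree i) with hNLdef
  have hNLne : NL.Nonempty := by
    by_contra h
    rw [Finset.not_nonempty_iff_eq_empty, Finset.filter_eq_empty_iff] at h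
    have hdeg : ∀ i : Fin (m + 2), G.degree i = 1 := fun i =>
      le_antisymm (by have := h (mem_univ i); omega) (degree_pos' G hc i)
    have hs := sum_degree' G hT
    rw [Finset.sum_congr rfl (fun i _ => hdeg i)] at hs
    simp at hs
    omega
  have hNLsum : ∑ i ∈ NL, ((G.degree i : ℝ) - 1) = (m : ℝ) := by
    have h1 : ∑ i ∈ NL, ((G.degree i : ℝ) - 1) = ∑ i, ((G.degree i : ℝ) - 1) := by
      refine Finset.sum_subset (Finset.filter_subset _ _) fun i _ hni => ?_
      simp only [hNLdef, Finset.mem_filter, mem_univ, true_and, not_le] at hni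
      have : G.degree i = 1 := le_antisymm (by omega) (degree_pos' G hc i)
      rw [this]
      norm_num
    rw [h1, Finset.sum_sub_distrib, hsumd]
    simp only [Finset.sum_const, Finset.card_univ, Fintype.card_fin, nsmul_eq_mul, mul_one]
    push_cast
    ring
  rcases le_or_gt (((m:ℝ) + 2) * F) ((m:ℝ) * N) with hcase | hcase
  · obtain ⟨r, hrNL, hrmin⟩ := Finset.exists_min_image NL (fun i => z i ^ 2) hNLne
    have hyr : (m : ℝ) * z r ^ 2 ≤ F := by
      calc (m:ℝ) * z r ^ 2 = ∑ i ∈ NL, ((G.degree i : ℝ) - 1) * z r ^ 2 := by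
            rw [← Finset.sum_mul, hNLsum]
        _ ≤ ∑ i ∈ NL, ((G.degree i : ℝ) - 1) * z i ^ 2 :=
            Finset.sum_le_sum fun i hi =>
              mul_le_mul_of_nonneg_left (hrmin i hi) (by linarith [hd1 i])
        _ ≤ F := Finset.sum_le_sum_of_subset_of_nonneg (Finset.filter_subset _ _)
              fun i _ _ => mul_nonneg (by linarith [hd1 i]) (hy0 i)
    have hroot := rooted_bound G hT z r
    have h2 : 0 ≤ (F - (m:ℝ) * z r ^ 2) * ((m:ℝ) * N - ((m:ℝ)+1) * F - (m:ℝ) * z r ^ 2) :=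
      mul_nonneg (by linarith) (by linarith)
    nlinarith [mul_le_mul_of_nonneg_left hroot (sq_nonneg (m:ℝ)), h2]
  · obtain ⟨r, hrNL, hrmax⟩ := Finset.exists_max_image NL (fun i => z i ^ 2) hNLne
    have hyr : F ≤ (m : ℝ) * z r ^ 2 := by
      calc F = ∑ i ∈ NL, ((G.degree i : ℝ) - 1) * z i ^ 2 := by
            refine (Finset.sum_subset (Finset.filter_subset _ _) fun i _ hni => ?_).symm
            simp only [hNLdef, Finset.mem_filter, mem_univ, true_and, not_le] at hni
            have : G.degree i = 1 := le_antisymm (by omega) (degree_pos' G hc i)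
            rw [this]
            norm_num
        _ ≤ ∑ i ∈ NL, ((G.degree i : ℝ) - 1) * z r ^ 2 :=
            Finset.sum_le_sum fun i hi =>
              mul_le_mul_of_nonneg_left (hrmax i hi) (by linarith [hd1 i])
        _ = (m:ℝ) * z r ^ 2 := by rw [← Finset.sum_mul, hNLsum]
    have hroot := rooted_bound G hT z r
    have h2 : 0 ≤ ((m:ℝ) * z r ^ 2 - F) * ((m:ℝ) * z r ^ 2 + ((m:ℝ)+1) * F - (m:ℝ) * N) :=
      mul_nonneg (by linarith) (by linarith)
    nlinarith [mul_le_mul_of_nonneg_left hroot (sq_nonneg (m:ℝ)), h2]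

lemma T_le (z : Fin (m + 2) → ℝ) :
    (∑ i, ∑ j, if G.Adj i j then z i * z j else 0)
      ≤ ∑ i, (G.degree i : ℝ) * z i ^ 2 := by
  classical
  have key : ∀ i j : Fin (m + 2), (if G.Adj i j then z i * z j else 0)
      ≤ ((if G.Adj i j then z i ^ 2 else 0) + (if G.Adj i j then z j ^ 2 else 0)) / 2 := by
    intro i j
    by_cases h : G.Adj i j
    · simp only [if_pos h]
      nlinarith [sq_nonneg (z i - z j)]
    · simp [if_neg h]
  have inner1 : ∀ i : Fin (m + 2), ∑ j, (if G.Adj i j then z i ^ 2 else 0)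
      = (G.degree i : ℝ) * z i ^ 2 := by
    intro i
    rw [← Finset.sum_filter, Finset.sum_const, ← SimpleGraph.neighborFinset_eq_filter,
      SimpleGraph.card_neighborFinset_eq_degree, nsmul_eq_mul]
  have inner2 : ∑ i : Fin (m + 2), ∑ j, (if G.Adj i j then z j ^ 2 else 0)
      = ∑ i, (G.degree i : ℝ) * z i ^ 2 := by
    rw [Finset.sum_comm]
    refine Finset.sum_congr rfl fun j _ => ?_
    have hf : filter (fun i => G.Adj i j) univ = G.neighborFinset j := by
      ext a
      simp [SimpleGraph.mem_neighborFinset, G.adj_comm]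
    rw [← Finset.sum_filter, Finset.sum_const, hf,
      SimpleGraph.card_neighborFinset_eq_degree, nsmul_eq_mul]
  calc (∑ i, ∑ j, if G.Adj i j then z i * z j else 0)
      ≤ ∑ i, ∑ j, ((if G.Adj i j then z i ^ 2 else 0) + (if G.Adj i j then z j ^ 2 else 0)) / 2 :=
        Finset.sum_le_sum fun i _ => Finset.sum_le_sum fun j _ => key i j
    _ = ∑ i, ((∑ j, (if G.Adj i j then z i ^ 2 else 0))
          + (∑ j, (if G.Adj i j then z j ^ 2 else 0))) / 2 := by
        refine Finset.sum_congr rfl fun i _ => ?_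
        rw [← Finset.sum_div, Finset.sum_add_distrib]
    _ = ((∑ i, ∑ j, (if G.Adj i j then z i ^ 2 else 0))
          + (∑ i : Fin (m + 2), ∑ j, (if G.Adj i j then z j ^ 2 else 0))) / 2 := by
        rw [← Finset.sum_div, Finset.sum_add_distrib]
    _ = ∑ i, (G.degree i : ℝ) * z i ^ 2 := by
        rw [inner2, Finset.sum_congr rfl fun i _ => inner1 i]
        ring

lemma qLap_mulVec (q : ℝ) (x : Fin (m + 2) → ℝ) (i : Fin (m + 2)) :
    (qLap G q).mulVec x i
      = x i + q ^ 2 * ((G.degree i : ℝ) * x i - x i)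
        - q * ∑ j, (if G.Adj i j then x j else 0) := by
  classical
  have hn : ((G.neighborSet i).ncard : ℕ) = G.degree i := by
    rw [Set.ncard_eq_toFinset_card', ← SimpleGraph.neighborFinset_def,
      SimpleGraph.card_neighborFinset_eq_degree]
  simp only [qLap, Matrix.sub_mulVec, Matrix.add_mulVec, Matrix.one_mulVec,
    Matrix.smul_mulVec, Pi.sub_apply, Pi.add_apply, Pi.smul_apply, smul_eq_mul,
    Matrix.mulVec_diagonal]
  rw [hn]
  congr 1
  congr 1
  simp only [Matrix.mulVec, dotProduct, Matrix.of_apply]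
  refine Finset.sum_congr rfl fun j _ => ?_
  by_cases h : G.Adj i j <;> simp [h]

end QLapAux

set_option maxHeartbeats 1000000 in
open QLapAux Finset in
theorem qLap_max_eigenvalue_upper_bound {m : ℕ}
    (G : SimpleGraph (Fin (m + 2))) (hT : G.IsTree) (q : ℝ) :
    sSup (spectrum ℝ (qLap G q)) ≤
      (2 + (m : ℝ) * q ^ 2 +
        Real.sqrt (((m : ℝ) + 2) ^ 2 * q ^ 4 + 4 * ((m : ℝ) + 1) * (1 - q ^ 2) * q ^ 2)) / 2 := by
  classical
  have hB0 : 0 ≤ (2 + (m : ℝ) * q ^ 2 +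
      Real.sqrt (((m : ℝ) + 2) ^ 2 * q ^ 4 + 4 * ((m : ℝ) + 1) * (1 - q ^ 2) * q ^ 2)) / 2 := by
    positivity
  refine Real.sSup_le (fun lam hlam => ?_) hB0
  obtain ⟨x, hx0, hx⟩ := exists_eigenvector hlam
  set z : Fin (m + 2) → ℝ := fun i => |x i| with hzdef
  set N := ∑ i, x i ^ 2 with hNdef
  set F := ∑ i, ((G.degree i : ℝ) - 1) * x i ^ 2 with hFdef
  set Tx := ∑ i, ∑ j, if G.Adj i j then x i * x j else 0 with hTxdef
  set Tz := ∑ i, ∑ j, if G.Adj i j then z i * z j else 0 with hTzdef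
  have hzx : ∀ i, z i ^ 2 = x i ^ 2 := fun i => sq_abs (x i)
  have hN0 : 0 < N := by
    rcases Function.ne_iff.1 hx0 with ⟨i, hi⟩
    exact Finset.sum_pos' (fun j _ => sq_nonneg _)
      ⟨i, Finset.mem_univ i, (sq_nonneg (x i)).lt_of_ne (Ne.symm (pow_ne_zero 2 hi))⟩
  have hc := hT.isConnected
  have hd1 : ∀ i, (1:ℝ) ≤ (G.degree i : ℝ) := fun i => by
    exact_mod_cast degree_pos' G hc i
  have hdm : ∀ i, (G.degree i : ℝ) ≤ (m:ℝ) + 1 := fun i => by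
    have h := G.degree_lt_card_verts i
    rw [Fintype.card_fin] at h
    have : G.degree i ≤ m + 1 := by omega
    exact_mod_cast this
  have hF0 : 0 ≤ F := Finset.sum_nonneg fun i _ =>
    mul_nonneg (by linarith [hd1 i]) (sq_nonneg _)
  have hFm : F ≤ (m:ℝ) * N := by
    rw [hFdef, hNdef, Finset.mul_sum]
    exact Finset.sum_le_sum fun i _ =>
      mul_le_mul_of_nonneg_right (by linarith [hdm i]) (sq_nonneg _)
  have hquad : lam * N = N + q ^ 2 * F - q * Tx := by
    have h1 : ∀ i, (qLap G q).mulVec x i = lam * x i := fun i => by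
      rw [hx]; simp
    have h2 : ∑ i, x i * ((qLap G q).mulVec x i) = lam * N := by
      rw [hNdef, Finset.mul_sum]
      exact Finset.sum_congr rfl fun i _ => by rw [h1 i]; ring
    have hS : ∀ i, x i * (∑ j, if G.Adj i j then x j else 0)
        = ∑ j, (if G.Adj i j then x i * x j else 0) := fun i => by
      rw [Finset.mul_sum]
      exact Finset.sum_congr rfl fun j _ => by by_cases h : G.Adj i j <;> simp [h]
    have h3 : ∑ i, x i * ((qLap G q).mulVec x i) = N + q ^ 2 * F - q * Tx := by
      calc ∑ i, x i * ((qLap G q).mulVec x i)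
          = ∑ i, (x i ^ 2 + q ^ 2 * ((G.degree i : ℝ) * x i ^ 2 - x i ^ 2)
              - q * ∑ j, (if G.Adj i j then x i * x j else 0)) := by
            refine Finset.sum_congr rfl fun i _ => ?_
            rw [qLap_mulVec G q x i, ← hS i]
            ring
        _ = N + q ^ 2 * F - q * Tx := by
            rw [Finset.sum_sub_distrib, Finset.sum_add_distrib, ← Finset.mul_sum,
              ← Finset.mul_sum, Finset.sum_sub_distrib]
            have hFexp : (∑ i, ((G.degree i : ℝ) - 1) * x i ^ 2)
                = (∑ i, (G.degree i : ℝ) * x i ^ 2) - ∑ i, x i ^ 2 := by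
              rw [← Finset.sum_sub_distrib]
              exact Finset.sum_congr rfl fun i _ => by ring
            rw [hNdef, hTxdef, hFdef, hFexp]
    linarith [h2, h3]
  have hTz0 : 0 ≤ Tz := Finset.sum_nonneg fun i _ => Finset.sum_nonneg fun j _ => by
    by_cases h : G.Adj i j <;>
      simp [h, hzdef, mul_nonneg (abs_nonneg (x i)) (abs_nonneg (x j))]
  have habs : |Tx| ≤ Tz := by
    calc |Tx| ≤ ∑ i, |∑ j, if G.Adj i j then x i * x j else 0| := by
          rw [hTxdef]; exact Finset.abs_sum_le_sum_abs _ _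
      _ ≤ ∑ i, ∑ j, |if G.Adj i j then x i * x j else 0| :=
          Finset.sum_le_sum fun i _ => Finset.abs_sum_le_sum_abs _ _
      _ = Tz := Finset.sum_congr rfl fun i _ => Finset.sum_congr rfl fun j _ => by
          by_cases h : G.Adj i j <;> simp [h, abs_mul, hzdef]
  set e := |q| with hedef
  have he0 : 0 ≤ e := abs_nonneg q
  have he2 : e ^ 2 = q ^ 2 := sq_abs q
  have hlamN : (lam - 1) * N ≤ q ^ 2 * F + e * Tz := by
    have h1 : -(q * Tx) ≤ e * Tz := by
      calc -(q * Tx) ≤ |q * Tx| := neg_le_abs _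
        _ = e * |Tx| := abs_mul q Tx
        _ ≤ e * Tz := mul_le_mul_of_nonneg_left habs he0
    nlinarith [hquad, h1]
  set D := (m:ℝ) ^ 2 * q ^ 4 + 4 * ((m:ℝ) + 1) * q ^ 2 with hDdef
  have hkey : q ^ 2 * F + e * Tz ≤ (((m:ℝ) * q ^ 2 + Real.sqrt D) / 2) * N := by
    rcases Nat.eq_zero_or_pos m with hm0 | hmpos
    · subst hm0
      have hdeg1 : ∀ i, (G.degree i : ℝ) = 1 := fun i => by
        have h2 := hdm i
        norm_num at h2
        have h3 : G.degree i = 1 := le_antisymm h2 (degree_pos' G hc i)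
        exact_mod_cast h3
      have hFz : F = 0 := by
        rw [hFdef]
        exact Finset.sum_eq_zero fun i _ => by rw [hdeg1 i]; ring
      have hTzN : Tz ≤ N := by
        have h := T_le G z
        rw [← hTzdef] at h
        calc Tz ≤ ∑ i, (G.degree i : ℝ) * z i ^ 2 := h
          _ = N := by
              rw [hNdef]
              exact Finset.sum_congr rfl fun i _ => by rw [hdeg1 i, one_mul, hzx i]
      have hsD : Real.sqrt D = 2 * e := by
        have hDe : D = (2 * e) ^ 2 := by rw [hDdef, ← he2]; push_cast; ring
        rw [hDe, Real.sqrt_sq (by positivity)]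
      rw [hFz, hsD]
      push_cast
      nlinarith [mul_le_mul_of_nonneg_left hTzN he0]
    · have hm1 : (1:ℝ) ≤ (m:ℝ) := by exact_mod_cast hmpos
      have htree := tree_lemma G hT hmpos z
      have hFzz : (∑ i, ((G.degree i : ℝ) - 1) * z i ^ 2) = F := by
        rw [hFdef]; exact Finset.sum_congr rfl fun i _ => by rw [hzx i]
      have hNzz : (∑ i, z i ^ 2) = N := by
        rw [hNdef]; exact Finset.sum_congr rfl fun i _ => by rw [hzx i]
      rw [hFzz, hNzz, ← hTzdef] at htree
      set s := Real.sqrt (((m:ℝ) + 1) * F * ((m:ℝ) * N - F)) with hsdef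
      have hs0 : 0 ≤ s := Real.sqrt_nonneg _
      have hs2 : s ^ 2 = ((m:ℝ) + 1) * F * ((m:ℝ) * N - F) :=
        Real.sq_sqrt (mul_nonneg (mul_nonneg (by linarith) hF0) (by linarith))
      have hmTz : (m:ℝ) * Tz ≤ 2 * s := by
        have hsq : ((m:ℝ) * Tz) ^ 2 ≤ (2 * s) ^ 2 := by nlinarith [htree, hs2]
        have hp : 0 ≤ (m:ℝ) * Tz := mul_nonneg (by positivity) hTz0
        nlinarith [hsq, hp, hs0]
      set g := Real.sqrt ((m:ℝ) ^ 2 * e ^ 2 + 4 * ((m:ℝ) + 1)) with hgdef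
      have hg0 : 0 ≤ g := Real.sqrt_nonneg _
      have hg2 : g ^ 2 = (m:ℝ) ^ 2 * e ^ 2 + 4 * ((m:ℝ) + 1) :=
        Real.sq_sqrt (by positivity)
      have hsqrtD : Real.sqrt D = e * g := by
        have hDe : D = e ^ 2 * ((m:ℝ) ^ 2 * e ^ 2 + 4 * ((m:ℝ) + 1)) := by
          rw [hDdef, show q ^ 4 = (q ^ 2) ^ 2 by ring, show q ^ 2 = e ^ 2 from he2.symm]
          ring
        rw [hDe, Real.sqrt_mul (sq_nonneg e), Real.sqrt_sq he0, hgdef]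
      have hclaim : e * ((m:ℝ) * (2 * F - (m:ℝ) * N)) + 4 * s ≤ g * ((m:ℝ) * N) := by
        have hgN0 : 0 ≤ g * ((m:ℝ) * N) :=
          mul_nonneg hg0 (mul_nonneg (by positivity) hN0.le)
        rcases le_or_gt (e * ((m:ℝ) * (2 * F - (m:ℝ) * N)) + 4 * s) 0 with h | h
        · linarith
        · have hcert : ((m:ℝ) + 1) * ((g * ((m:ℝ) * N)) ^ 2
                - (e * ((m:ℝ) * (2 * F - (m:ℝ) * N)) + 4 * s) ^ 2)
              = (2 * e * (m:ℝ) * s - 2 * ((m:ℝ) + 1) * (2 * F - (m:ℝ) * N)) ^ 2 := by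
            linear_combination (((m:ℝ) + 1) * (m:ℝ) ^ 2 * N ^ 2) * hg2
              - (16 * ((m:ℝ) + 1) + 4 * e ^ 2 * (m:ℝ) ^ 2) * hs2
          have hsq : (e * ((m:ℝ) * (2 * F - (m:ℝ) * N)) + 4 * s) ^ 2
              ≤ (g * ((m:ℝ) * N)) ^ 2 := by
            nlinarith [hcert, hm1,
              sq_nonneg (2 * e * (m:ℝ) * s - 2 * ((m:ℝ) + 1) * (2 * F - (m:ℝ) * N))]
          nlinarith [hsq, h, hgN0]
      have h1 : 2 * e * ((m:ℝ) * Tz) ≤ 2 * e * (2 * s) :=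
        mul_le_mul_of_nonneg_left hmTz (by positivity)
      have h2 : e * (e * ((m:ℝ) * (2 * F - (m:ℝ) * N)) + 4 * s) ≤ e * (g * ((m:ℝ) * N)) :=
        mul_le_mul_of_nonneg_left hclaim he0
      have hcomb : (m:ℝ) * (2 * (e ^ 2 * F) + 2 * (e * Tz))
          ≤ (m:ℝ) * ((((m:ℝ) * e ^ 2 + e * g) / 2) * N * 2) := by nlinarith [h1, h2]
      have hdivm : 2 * (e ^ 2 * F) + 2 * (e * Tz) ≤ (((m:ℝ) * e ^ 2 + e * g) / 2) * N * 2 := by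
        have hmpos' : (0:ℝ) < (m:ℝ) := by linarith
        exact le_of_mul_le_mul_left (by linarith [hcomb]) hmpos'
      rw [hsqrtD, ← he2]
      linarith [hdivm]
  have hstep : (lam - 1) * N ≤ (((m:ℝ) * q ^ 2 + Real.sqrt D) / 2) * N :=
    le_trans hlamN hkey
  have hlam : lam - 1 ≤ ((m:ℝ) * q ^ 2 + Real.sqrt D) / 2 :=
    le_of_mul_le_mul_right hstep hN0
  have harg : ((m:ℝ) + 2) ^ 2 * q ^ 4 + 4 * ((m:ℝ) + 1) * (1 - q ^ 2) * q ^ 2 = D := by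
    rw [hDdef]; ring
  rw [harg]
  linarith [hlam]
end

section
/- Let T be a tree on n vertices with an orientation of its edges, and let L_T^{q,t} be the complex matrix with diagonal entries 1 + qt(d_i - 1), entry -q at position (i,j) when the edge {i,j} is oriented from i to j, entry -t at position (j,i) for the same edge, and 0 otherwise. Then det(L_T^{q,t}) = 1 - qt for all complex q, t. -/
open Matrix SimpleGraph

lemma qt_exists_leaf {V : Type*} [Fintype V] [DecidableEq V] (G : SimpleGraph V)
    (hT : G.IsTree) (h2 : 2 ≤ Fintype.card V) : ∃ v u, G.neighborSet v = {u} := by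
  classical
  have hdegpos : ∀ v : V, 0 < G.degree v := by
    intro v
    obtain ⟨w, hw⟩ := Fintype.exists_ne_of_one_lt_card (by omega) v
    obtain ⟨p⟩ := hT.isConnected.preconnected v w
    cases p with
    | nil => exact absurd rfl hw
    | cons h p => exact (G.degree_pos_iff_exists_adj v).mpr ⟨_, h⟩
  by_contra hno
  push_neg at hno
  have hdeg2 : ∀ v : V, 2 ≤ G.degree v := by
    intro v
    rcases Nat.lt_or_ge (G.degree v) 2 with h | h
    · exfalso
      have hd : G.degree v = 1 := by have := hdegpos v; omega
      obtain ⟨u, hu⟩ := Finset.card_eq_one.mp hd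
      refine hno v u ?_
      ext w
      simp [← SimpleGraph.mem_neighborFinset, hu]
    · exact h
  have hsum := G.sum_degrees_eq_twice_card_edges
  have hcard := hT.card_edgeFinset
  have hge : Fintype.card V • 2 ≤ ∑ v, G.degree v :=
    Finset.card_nsmul_le_sum _ _ _ (fun x _ => hdeg2 x)
  simp only [Finset.card_univ, smul_eq_mul] at hge
  omega

lemma qt_walk_reach {V : Type*} {G : SimpleGraph V} {v : V} :
    ∀ {a b : V} (p : G.Walk a b), v ∉ p.support → ∀ (ha : ¬ a = v) (hb : ¬ b = v),
    (G.comap (Subtype.val : {w // ¬ w = v} → V)).Reachable ⟨a, ha⟩ ⟨b, hb⟩ := by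
  intro a b p
  induction p with
  | nil => intro _ ha hb; rfl
  | @cons a c b h p ih =>
    intro hv ha hb
    have hc : ¬ c = v := by
      intro hcv
      exact hv (by rw [Walk.support_cons]; exact List.mem_cons_of_mem _ (hcv ▸ p.start_mem_support))
    have hadj : (G.comap (Subtype.val : {w // ¬ w = v} → V)).Adj ⟨a, ha⟩ ⟨c, hc⟩ := h
    exact hadj.reachable.trans (ih (fun hmem => hv (by simp [Walk.support_cons, hmem])) hc hb)

lemma qt_tree_del {V : Type*} {G : SimpleGraph V} (hT : G.IsTree)
    {v u : V} (hvu : G.neighborSet v = {u}) :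
    (G.comap (Subtype.val : {w // ¬ w = v} → V)).IsTree := by
  classical
  have hadjvu : G.Adj v u := by
    have : u ∈ G.neighborSet v := by rw [hvu]; rfl
    exact this
  have huv : ¬ u = v := fun h => G.irrefl (h ▸ hadjvu)
  have hne : Nonempty {w // ¬ w = v} := ⟨⟨u, huv⟩⟩
  constructor
  · apply SimpleGraph.Connected.mk
    rintro ⟨a, ha⟩ ⟨b, hb⟩
    obtain ⟨p₀⟩ := hT.isConnected.preconnected a b
    let P := p₀.toPath
    have hP : (P : G.Walk a b).IsPath := P.2
    have hvP : v ∉ (P : G.Walk a b).support := by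
      intro hmem
      set p : G.Walk a b := (P : G.Walk a b)
      have hnd := hP.support_nodup
      have hsplit : (p.takeUntil v hmem).append (p.dropUntil v hmem) = p :=
        p.take_spec hmem
      have hsupp : p.support = (p.takeUntil v hmem).support
          ++ (p.dropUntil v hmem).support.tail := by
        conv_lhs => rw [← hsplit]
        exact Walk.support_append _ _
      have hu1 : u ∈ (p.takeUntil v hmem).support := by
        have : u ∈ (p.takeUntil v hmem).reverse.support := by
          cases (p.takeUntil v hmem).reverse with
          | nil => exact absurd rfl ha
          | cons h q =>
            have hx : _ ∈ G.neighborSet v := h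
            rw [hvu] at hx
            rw [Walk.support_cons]
            exact List.mem_cons_of_mem _ (hx ▸ q.start_mem_support)
        rwa [Walk.support_reverse, List.mem_reverse] at this
      have hu2 : u ∈ (p.dropUntil v hmem).support.tail := by
        cases p.dropUntil v hmem with
        | nil => exact absurd rfl hb
        | cons h q =>
          have hx : _ ∈ G.neighborSet v := h
          rw [hvu] at hx
          rw [Walk.support_cons]
          exact hx ▸ q.start_mem_support
      rw [hsupp] at hnd
      exact (List.disjoint_of_nodup_append hnd) hu1 hu2
    exact qt_walk_reach (P : G.Walk a b) hvP ha hb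
  · intro x c hc
    exact hT.IsAcyclic (c.map ⟨Subtype.val, fun h => h⟩)
      (hc.map Subtype.val_injective)

open Classical in
lemma qt_aux : ∀ (n : ℕ) (V : Type u) [Fintype V] [DecidableEq V]
    (G : SimpleGraph V) (_ : G.IsTree)
    (r : V → V → Prop)
    (_ : ∀ i j, r i j → G.Adj i j)
    (_ : ∀ i j, G.Adj i j → Xor' (r i j) (r j i))
    (q t : ℂ), Fintype.card V ≤ n →
    (Matrix.of fun i j =>
        if i = j then 1 + q * t * (((G.neighborSet i).ncard : ℂ) - 1)
        else if r i j then -q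
        else if r j i then -t
        else 0 : Matrix V V ℂ).det = 1 - q * t := by
  intro n
  induction n with
  | zero =>
    intro V _ _ G hT r hr hor q t hcard
    have : 0 < Fintype.card V := Fintype.card_pos_iff.mpr hT.isConnected.nonempty
    omega
  | succ n ih =>
    intro V _ _ G hT r hr hor q t hcard
    classical
    by_cases h1 : Fintype.card V = 1
    · obtain ⟨w, hw⟩ := Fintype.card_eq_one_iff.mp h1
      haveI : Unique V := ⟨⟨w⟩, hw⟩
      rw [Matrix.det_unique]
      have hns : G.neighborSet (default : V) = ∅ := by
        ext x
        simp only [Set.mem_empty_iff_false, iff_false, SimpleGraph.mem_neighborSet]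
        intro hadj
        exact G.ne_of_adj hadj ((hw (default : V)).trans (hw x).symm)
      simp only [Matrix.of_apply, if_pos rfl, if_true, hns, Set.ncard_empty, Nat.cast_zero]
      ring
    · have h2 : 2 ≤ Fintype.card V := by
        have : 0 < Fintype.card V := Fintype.card_pos_iff.mpr hT.isConnected.nonempty
        omega
      obtain ⟨v, u, hvu⟩ := qt_exists_leaf G hT h2
      set M : Matrix V V ℂ := Matrix.of (fun i j =>
        if i = j then 1 + q * t * (((G.neighborSet i).ncard : ℂ) - 1)
        else if r i j then -q
        else if r j i then -t
        else 0) with hMdef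
      have hadjvu : G.Adj v u := by
        have : u ∈ G.neighborSet v := by rw [hvu]; rfl
        exact this
      have hne : u ≠ v := fun h => G.irrefl (h ▸ hadjvu)
      have hdv : (G.neighborSet v).ncard = 1 := by rw [hvu]; exact Set.ncard_singleton u
      have hMvv : M v v = 1 := by
        simp only [hMdef, Matrix.of_apply, if_pos rfl, if_true, hdv, Nat.cast_one, sub_self,
          mul_zero, add_zero]
      have hnadj : ∀ w : V, w ≠ u → ¬ G.Adj v w := by
        intro w hwu h
        have : w ∈ G.neighborSet v := h
        rw [hvu] at this
        exact hwu this
      have hrow : ∀ w, w ≠ v → w ≠ u → M v w = 0 := by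
        intro w hwv hwu
        have h1' : ¬ r v w := fun h => hnadj w hwu (hr _ _ h)
        have h2' : ¬ r w v := fun h => hnadj w hwu (hr _ _ h).symm
        simp [hMdef, Ne.symm hwv, h1', h2']
      have hcol : ∀ w, w ≠ v → w ≠ u → M w v = 0 := by
        intro w hwv hwu
        have h1' : ¬ r w v := fun h => hnadj w hwu (hr _ _ h).symm
        have h2' : ¬ r v w := fun h => hnadj w hwu (hr _ _ h)
        simp [hMdef, hwv, h1', h2']
      obtain ⟨c, hMuv0, hcMvu⟩ : ∃ c : ℂ, M u v + c * M v v = 0 ∧ c * M v u = -(q * t) := by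
        rcases hor v u hadjvu with ⟨ha1, ha2⟩ | ⟨ha1, ha2⟩
        · refine ⟨t, ?_, ?_⟩
          · rw [hMvv]
            simp only [hMdef, Matrix.of_apply, if_neg hne, if_neg ha2, if_pos ha1]
            ring
          · simp only [hMdef, Matrix.of_apply, if_neg (Ne.symm hne), if_pos ha1]
            ring
        · refine ⟨q, ?_, ?_⟩
          · rw [hMvv]
            simp only [hMdef, Matrix.of_apply, if_neg hne, if_pos ha1]
            ring
          · simp only [hMdef, Matrix.of_apply, if_neg (Ne.symm hne), if_neg ha2, if_pos ha1]
            ring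
      set M' : Matrix V V ℂ := M.updateRow u (M u + c • M v) with hM'def
      have hdet : M.det = M'.det := (M.det_updateRow_add_smul_self hne c).symm
      have hM'colv : ∀ i, ¬ i = v → M' i v = 0 := by
        intro i hi
        by_cases hiu : i = u
        · subst hiu
          rw [hM'def, Matrix.updateRow_self]
          simpa using hMuv0
        · rw [hM'def, Matrix.updateRow_ne hiu]
          exact hcol i hi hiu
      rw [hdet, Matrix.twoBlockTriangular_det M' (fun i => i = v)
        (fun i hi j hj => hj ▸ hM'colv i hi)]
      have hblock1 : ∀ (instd : DecidableEq {i // i = v}) (inst : Fintype {i // i = v}),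
          @Matrix.det _ instd inst _ _ (M'.toSquareBlockProp fun i => i = v) = 1 := by
        intro instd inst
        letI : Unique {i // i = v} := ⟨⟨⟨v, rfl⟩⟩, fun j => Subtype.ext j.2⟩
        rw [Matrix.det_unique]
        show M' v v = 1
        rw [hM'def, Matrix.updateRow_ne (Ne.symm hne)]
        exact hMvv
      rw [hblock1 _ _, one_mul]
      -- the second block
      set G' : SimpleGraph {a // ¬ a = v} := G.comap (Subtype.val) with hG'def
      have hT' : G'.IsTree := qt_tree_del hT hvu
      have hcard' : Fintype.card {a // ¬ a = v} ≤ n := by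
        have := Fintype.card_subtype_compl (fun a => a = v)
        rw [Fintype.card_subtype_eq v] at this
        omega
      have hdu1 : 1 ≤ (G.neighborSet u).ncard :=
        (Set.ncard_pos (Set.toFinite _)).mpr ⟨v, hadjvu.symm⟩
      have hdeg' : ∀ w : {a // ¬ a = v}, (G'.neighborSet w).ncard =
          if w.1 = u then (G.neighborSet u).ncard - 1 else (G.neighborSet w.1).ncard := by
        intro w
        have himg : Subtype.val '' (G'.neighborSet w) = G.neighborSet w.1 \ {v} := by
          ext x
          constructor
          · rintro ⟨⟨y, hy⟩, hadj, rfl⟩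
            exact ⟨hadj, hy⟩
          · rintro ⟨hadj, hx⟩
            exact ⟨⟨x, hx⟩, hadj, rfl⟩
        have hcardimg : (G'.neighborSet w).ncard = (G.neighborSet w.1 \ {v}).ncard := by
          rw [← himg, Set.ncard_image_of_injective _ Subtype.val_injective]
        by_cases hwu : w.1 = u
        · rw [if_pos hwu, hcardimg, hwu,
            Set.ncard_diff_singleton_of_mem (show v ∈ G.neighborSet u from hadjvu.symm)]
        · rw [if_neg hwu, hcardimg, Set.diff_singleton_eq_self]
          intro h
          have : w.1 ∈ G.neighborSet v := (SimpleGraph.mem_neighborSet _ _ _).mpr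
            ((SimpleGraph.mem_neighborSet _ _ _).mp h).symm
          rw [hvu] at this
          exact hwu this
      have hblock2 : M'.toSquareBlockProp (fun i => ¬ i = v) =
          (Matrix.of fun i j =>
            if i = j then 1 + q * t * (((G'.neighborSet i).ncard : ℂ) - 1)
            else if r i.1 j.1 then -q
            else if r j.1 i.1 then -t
            else 0 : Matrix {a // ¬ a = v} {a // ¬ a = v} ℂ) := by
        ext ⟨i, hi⟩ ⟨j, hj⟩
        show M' i j = _
        rw [Matrix.of_apply]
        by_cases hij : i = j
        · subst hij
          rw [if_pos rfl, hdeg' ⟨i, hi⟩]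
          by_cases hiu : i = u
          · rw [if_pos hiu]
            subst hiu
            rw [hM'def, Matrix.updateRow_self]
            show M i i + c * M v i = _
            rw [hcMvu]
            rw [hMdef]
            show (if i = i then 1 + q * t * (((G.neighborSet i).ncard : ℂ) - 1)
              else if r i i then -q else if r i i then -t else 0) + -(q * t) = _
            rw [if_pos rfl, Nat.cast_sub hdu1, Nat.cast_one]
            ring
          · rw [hM'def, Matrix.updateRow_ne hiu, if_neg hiu, hMdef, Matrix.of_apply, if_pos rfl]
        · rw [if_neg (fun h : (⟨i, hi⟩ : {a // ¬ a = v}) = ⟨j, hj⟩ => hij (congrArg Subtype.val h))]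
          by_cases hiu : i = u
          · subst hiu
            rw [hM'def, Matrix.updateRow_self]
            show M i j + c * M v j = _
            rw [hrow j hj (fun h => hij h.symm), mul_zero, add_zero, hMdef, Matrix.of_apply,
              if_neg hij]
          · rw [hM'def, Matrix.updateRow_ne hiu, hMdef, Matrix.of_apply, if_neg hij]
      rw [hblock2]
      exact ih {a // ¬ a = v} G' hT' (fun a b => r a.1 b.1) (fun i j h => hr _ _ h)
        (fun i j h => hor _ _ h) q t hcard'

/- `r` encodes an orientation of the edges of the tree `G`: every oriented pair is an edge,
and each edge is oriented in exactly one of its two directions.  The `q,t`-Laplacian has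
diagonal entries `1 + qt(dᵢ - 1)`, entry `-q` at `(i,j)` when the edge `{i,j}` is oriented
from `i` to `j`, entry `-t` at `(j,i)` for that edge, and `0` otherwise.  Its determinant
is `1 - qt`. -/
open Classical in
theorem det_qtLap_tree {V : Type*} [Fintype V] [DecidableEq V]
    (G : SimpleGraph V) (hT : G.IsTree)
    (r : V → V → Prop)
    (hr : ∀ i j, r i j → G.Adj i j)
    (hor : ∀ i j, G.Adj i j → Xor' (r i j) (r j i))
    (q t : ℂ) :
    (Matrix.of fun i j =>
        if i = j then 1 + q * t * (((G.neighborSet i).ncard : ℂ) - 1)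
        else if r i j then -q
        else if r j i then -t
        else 0 : Matrix V V ℂ).det = 1 - q * t := by
  exact qt_aux (Fintype.card V) V G hT r hr hor q t le_rfl
end
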